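/- arXiv:2507.02701 — 4 statements merged into one kernel-verified Lean document; each statement's English description precedes it below -/
import Mathlib

section
/- If a string Q ∈ P_Σ* contains equally many opening and closing parentheses and its square Q² is a substring of some balanced string (i.e., Q² ∈ F^sub_Σ), then Q has a balanced cyclic rotation: there exists i ∈ [0..|Q|] such that Q[i..|Q|)·Q[0..i) ∈ F_Σ. -/
open scoped NNReal ENNReal

attribute [local instance] Classical.propDecidable

/-- A labeled parenthesis over the alphabet `α`: `(true, a)` is the opening
parenthesis with label `a`, and `(false, a)` is the closing parenthesis. -/
abbrev Paren (α : Type*) := Bool × α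

/-- Balanced strings of labeled parentheses (forests), following Definition 2.1:
the smallest set containing the empty string, closed under concatenation, and
containing `(_a · F · )_a` for every forest `F` and label `a`. -/
inductive IsForest {α : Type*} : List (Paren α) → Prop
  | nil : IsForest []
  | append {F G : List (Paren α)} : IsForest F → IsForest G → IsForest (F ++ G)
  | wrap {F : List (Paren α)} (a : α) : IsForest F → IsForest ((true, a) :: F ++ [(false, a)])

/-- The fragment `l[i..j)` of a list. -/
def frag {β : Type*} (l : List β) (i j : ℕ) : List β := (l.take j).drop i

/-!
A string is balanced iff the pushdown automaton that pushes `a` on `(_a` and pops `a` on `)_a`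
accepts it from the empty stack. Every substring of a balanced string is read without error
from some stack. If `Q` has height `0` and `i` is a position where the height of `Q[0..i)` is
minimal, then no prefix of the rotation `R = Q[i..|Q|) · Q[0..i)` has negative height, so while
reading `R` (a substring of `Q²`) the automaton never touches the stack it started with; hence
it also reads `R` from the empty stack, and ends with the empty stack because `R` has height `0`.
-/

namespace Paren

variable {α : Type*}

def height (L : List (Paren α)) : ℤ :=
  L.countP (fun p => p.1) - L.countP (fun p => !p.1)

@[simp] theorem height_nil : height ([] : List (Paren α)) = 0 := by simp [height]

@[simp] theorem height_cons (p : Paren α) (L : List (Paren α)) :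
    height (p :: L) = (if p.1 then 1 else -1) + height L := by
  obtain ⟨_ | _, a⟩ := p <;> simp [height] <;> ring

theorem height_append (L M : List (Paren α)) : height (L ++ M) = height L + height M := by
  simp only [height, List.countP_append]; push_cast; ring

theorem exists_rotation_height_take_nonneg {Q : List (Paren α)} (hQ : height Q = 0) :
    ∃ i ≤ Q.length, ∀ m, 0 ≤ height ((Q.drop i ++ Q.take i).take m) := by
  obtain ⟨i, hi, hmin⟩ := Finset.exists_min_image (Finset.range (Q.length + 1))
    (fun j => height (Q.take j)) ⟨0, by simp⟩
  rw [Finset.mem_range] at hi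
  have hmin_all (j : ℕ) : height (Q.take i) ≤ height (Q.take j) := by
    rcases le_total j Q.length with hj | hj
    · exact hmin j (by simpa [Finset.mem_range] using Nat.lt_succ_of_le hj)
    · simpa [List.take_of_length_le hj, hQ] using hmin 0 (by simp)
  have hsplit : height (Q.take i) + height (Q.drop i) = 0 := by
    rw [← height_append, List.take_append_drop, hQ]
  have hdrop (m : ℕ) :
      height (Q.take i) + height ((Q.drop i).take m) = height (Q.take (i + m)) := by
    rw [← height_append, ← List.take_add]
  refine ⟨i, by omega, fun m => ?_⟩
  rw [List.take_append, height_append, List.length_drop, List.take_take]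
  by_cases hm : m ≤ Q.length - i
  · rw [Nat.sub_eq_zero_of_le hm, Nat.zero_min, List.take_zero, height_nil]
    linarith [hdrop m, hmin_all (i + m)]
  · rw [List.take_of_length_le (by simp; omega)]
    linarith [hmin_all (min (m - (Q.length - i)) i)]

/-- `Unwinds s L` says that `L = F₀ )_{s₀} F₁ )_{s₁} ⋯ F_k )_{s_k} F_{k+1}` with forests `Fⱼ`,
where `s = [s₀, …, s_k]`: exactly the words that empty the stack `s`. -/
def Unwinds : List α → List (Paren α) → Prop
  | [], L => IsForest L
  | a :: s, L => ∃ F M, IsForest F ∧ Unwinds s M ∧ L = F ++ (false, a) :: M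

theorem Unwinds.forest_append {s : List α} {F M : List (Paren α)} (hF : IsForest F)
    (hM : Unwinds s M) : Unwinds s (F ++ M) := by
  cases s with
  | nil => exact hF.append hM
  | cons a s =>
    obtain ⟨F', M', hF', hM', rfl⟩ := hM
    exact ⟨F ++ F', M', hF.append hF', hM', by simp⟩

section Run

variable [DecidableEq α]

def run : List (Paren α) → List α → Option (List α)
  | [], s => some s
  | (true, a) :: L, s => run L (a :: s)
  | (false, _) :: _, [] => none
  | (false, a) :: L, b :: s => if a = b then run L s else none

@[simp] theorem run_nil (s : List α) : run [] s = some s := rfl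

@[simp] theorem run_open_cons (a : α) (L : List (Paren α)) (s : List α) :
    run ((true, a) :: L) s = run L (a :: s) := rfl

@[simp] theorem run_close_cons_cons (a b : α) (L : List (Paren α)) (s : List α) :
    run ((false, a) :: L) (b :: s) = if a = b then run L s else none := rfl

theorem run_append (L M : List (Paren α)) (s : List α) :
    run (L ++ M) s = (run L s).bind (run M) := by
  induction L generalizing s with
  | nil => rfl
  | cons p L ih =>
    obtain ⟨_ | _, a⟩ := p
    · cases s with
      | nil => rfl
      | cons b s => simp only [List.cons_append, run_close_cons_cons]; split_ifs <;> simp [ih]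
    · exact ih _

theorem _root_.IsForest.run_eq {F : List (Paren α)} (hF : IsForest F) (s : List α) :
    run F s = some s := by
  induction hF generalizing s with
  | nil => rfl
  | append _ _ ihF ihG => simp [run_append, ihF, ihG]
  | wrap a _ ih => simp [run_append, ih]

theorem _root_.IsForest.exists_run_eq_of_infix {G L : List (Paren α)} (hG : IsForest G)
    (hL : L <:+: G) : ∃ s t, run L s = some t := by
  obtain ⟨u, v, rfl⟩ := hL
  have hrun := hG.run_eq []
  rw [run_append, run_append] at hrun
  obtain ⟨t, ht, -⟩ := Option.bind_eq_some_iff.mp hrun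
  obtain ⟨s, -, hst⟩ := Option.bind_eq_some_iff.mp ht
  exact ⟨s, t, hst⟩

theorem unwinds_of_run_eq_nil {L : List (Paren α)} {s : List α}
    (h : run L s = some []) : Unwinds s L := by
  induction L generalizing s with
  | nil => cases h; exact IsForest.nil
  | cons p L ih =>
    obtain ⟨_ | _, a⟩ := p
    · cases s with
      | nil => cases h
      | cons b s =>
        rw [run_close_cons_cons] at h
        split_ifs at h with hab
        exact ⟨[], L, IsForest.nil, ih h, by simp [hab]⟩
    · obtain ⟨F, M, hF, hM, rfl⟩ := ih h
      simpa using Unwinds.forest_append (.wrap a hF) hM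

theorem isForest_iff_run_eq {L : List (Paren α)} :
    IsForest L ↔ run L [] = some [] :=
  ⟨fun h => h.run_eq [], unwinds_of_run_eq_nil⟩

theorem length_eq_of_run_eq {L : List (Paren α)} {s t : List α}
    (h : run L s = some t) : (t.length : ℤ) = s.length + height L := by
  induction L generalizing s with
  | nil => cases h; simp
  | cons p L ih =>
    obtain ⟨_ | _, a⟩ := p
    · cases s with
      | nil => cases h
      | cons b s =>
        rw [run_close_cons_cons] at h
        split_ifs at h
        simp [ih h]
    · simp only [run_open_cons] at h
      simp [ih h]; ring

theorem exists_run_eq_of_run_append_eq {L : List (Paren α)} {s r t : List α}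
    (h : run L (s ++ r) = some t) (hpre : ∀ m, 0 ≤ s.length + height (L.take m)) :
    ∃ t', run L s = some t' ∧ t = t' ++ r := by
  induction L generalizing s with
  | nil => cases h; exact ⟨s, rfl, rfl⟩
  | cons p L ih =>
    obtain ⟨_ | _, a⟩ := p
    · cases s with
      | nil => simpa using hpre 1
      | cons b s =>
        rw [List.cons_append, run_close_cons_cons] at h
        split_ifs at h with hab
        refine (ih h fun m => ?_).imp fun t' ht' => ?_
        · simpa [add_assoc] using hpre (m + 1)
        · simpa [hab] using ht'
    · refine (ih (s := a :: s) h fun m => ?_).imp fun t' ht' => by simpa using ht'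
      simpa [add_assoc, add_comm] using hpre (m + 1)

theorem isForest_of_run_eq {L : List (Paren α)} {s t : List α}
    (h : run L s = some t) (hL : height L = 0) (hpre : ∀ m, 0 ≤ height (L.take m)) :
    IsForest L := by
  obtain ⟨t', ht', rfl⟩ :=
    exists_run_eq_of_run_append_eq (s := []) (by simpa using h) (by simpa using hpre)
  have hlen := length_eq_of_run_eq ht'
  rw [hL] at hlen
  simp only [List.length_nil, Nat.cast_zero, zero_add, Nat.cast_eq_zero,
    List.length_eq_zero_iff] at hlen
  exact isForest_iff_run_eq.mpr (hlen ▸ ht')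

end Run

end Paren

/-- Lemma C.4: if `Q ∈ P_Σ*` has equally many opening and
closing parentheses and `Q²` is a substring of some balanced string, then some
cyclic rotation `Q[i..|Q|) · Q[0..i)` of `Q` is balanced. -/
theorem balanced_cyclic_rotation {α : Type*} (Q : List (Paren α))
    (heq : Q.countP (fun p => p.1) = Q.countP (fun p => !p.1))
    (hsub : ∃ G : List (Paren α), IsForest G ∧ (Q ++ Q) <:+: G) :
    ∃ i ≤ Q.length, IsForest (Q.drop i ++ Q.take i) := by
  obtain ⟨G, hG, hQQ⟩ := hsub
  have hQ : Paren.height Q = 0 := by simp [Paren.height, heq]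
  obtain ⟨i, hi, hpre⟩ := Paren.exists_rotation_height_take_nonneg hQ
  have hrot : Q.drop i ++ Q.take i <:+: Q ++ Q := ⟨Q.take i, Q.drop i, by
    rw [← List.append_assoc, List.take_append_drop, List.append_assoc, List.take_append_drop]⟩
  obtain ⟨s, t, hrun⟩ := hG.exists_run_eq_of_infix (hrot.trans hQQ)
  refine ⟨i, hi, Paren.isForest_of_run_eq hrun ?_ hpre⟩
  rw [Paren.height_append, add_comm, ← Paren.height_append, List.take_append_drop, hQ]
end

section
/- For all forests F, G ∈ F_Σ, fragments F[f..f') and G[g..g'), and weight functions w : (Σ∪{ε})² → ℝ≥0, one has t̃ed^w(F[f..f'), G[g..g')) = ted^w(F_{[f..f')}, G_{[g..g')}), where F_{[f..f')} and G_{[g..g')} are the induced subforests. -/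
open scoped NNReal ENNReal

attribute [local instance] Classical.propDecidable

/-- `IsNode F i j` means that `[i..j]` is a node of the forest `F`: `F[i]` is an
opening parenthesis, `F[j]` is a closing parenthesis with the same label,
and `F(i..j)` is balanced. -/
def IsNode {α : Type*} (F : List (Paren α)) (i j : ℕ) : Prop :=
  i < j ∧ j < F.length ∧ (∃ a : α, F[i]? = some (true, a) ∧ F[j]? = some (false, a)) ∧
    IsForest (frag F (i + 1) j)

/-- `MateRel F i j` holds when positions `i` and `j` are the paired parentheses
of a node of `F` (in either order); `j` is the mate of `i`. -/
def MateRel {α : Type*} (F : List (Paren α)) (i j : ℕ) : Prop :=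
  IsNode F i j ∨ IsNode F j i

/-- A single edge of the alignment graph: horizontal, vertical, or diagonal. -/
def AlignStep (p q : ℕ × ℕ) : Prop :=
  q = (p.1 + 1, p.2) ∨ q = (p.1, p.2 + 1) ∨ q = (p.1 + 1, p.2 + 1)

/-- An alignment of `X[x..x')` onto `Y[y..y')` is a path in the alignment graph
from `(x, y)` to `(x', y')`, interpreted as its sequence of vertices. -/
def IsAlignment (x x' y y' : ℕ) (path : List (ℕ × ℕ)) : Prop :=
  path.head? = some (x, y) ∧ path.getLast? = some (x', y') ∧ path.Chain' AlignStep

/-- The alignment (path) aligns character `f` of `X` to character `g` of `Y`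
(a diagonal edge `(f, g) → (f + 1, g + 1)`). -/
def AlignsAt (path : List (ℕ × ℕ)) (f g : ℕ) : Prop :=
  ∃ t, path[t]? = some (f, g) ∧ path[t + 1]? = some (f + 1, g + 1)

/-- The alignment deletes character `f` of `X` (a horizontal edge). -/
def DeletesAt (path : List (ℕ × ℕ)) (f : ℕ) : Prop :=
  ∃ t g, path[t]? = some (f, g) ∧ path[t + 1]? = some (f + 1, g)

/-- The alignment inserts character `g` of `Y` (a vertical edge). -/
def InsertsAt (path : List (ℕ × ℕ)) (g : ℕ) : Prop :=
  ∃ t f, path[t]? = some (f, g) ∧ path[t + 1]? = some (f, g + 1)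

/-- Consistency condition of forest alignments (Definition 2.6): whenever the
alignment aligns `F[f]` to `G[g]`, it also aligns the mate of `F[f]` to the mate
of `G[g]`.  An alignment satisfying this condition is a forest alignment. -/
def Consistent {α : Type*} (F G : List (Paren α)) (path : List (ℕ × ℕ)) : Prop :=
  ∀ f g f' g', AlignsAt path f g → MateRel F f f' → MateRel G g g' → AlignsAt path f' g'

/-- The width of the alignment is at most `m`: every vertex `(x, y)` on the path
satisfies `|x - y| ≤ m`. -/
def WidthLE (m : ℕ) (path : List (ℕ × ℕ)) : Prop :=
  ∀ p ∈ path, p.1 ≤ p.2 + m ∧ p.2 ≤ p.1 + m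

/-- The label of the `i`-th character of `X` (as an element of `Σ ∪ {ε}`,
encoded by `Option α`; out-of-range positions give `ε`). -/
def lbl {α : Type*} (X : List (Paren α)) (i : ℕ) : Option α := (X[i]?).map Prod.snd

/-- Cost of an alignment path with respect to the weight function `w̃(p, q) = ½·w(λ(p), λ(q))`:
horizontal edges cost `½·w(λ(X[x]), ε)`, vertical edges `½·w(ε, λ(Y[y]))`, and
diagonal edges `½·w(λ(X[x]), λ(Y[y]))`. -/
noncomputable def pathCost {α : Type*} (w : Option α → Option α → ℝ≥0)
    (X Y : List (Paren α)) : List (ℕ × ℕ) → ℝ≥0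
  | [] => 0
  | [_] => 0
  | p :: q :: rest =>
      (if q.1 = p.1 + 1 ∧ q.2 = p.2 then (1 / 2 : ℝ≥0) * w (lbl X p.1) none
       else if q.1 = p.1 ∧ q.2 = p.2 + 1 then (1 / 2 : ℝ≥0) * w none (lbl Y p.2)
       else (1 / 2 : ℝ≥0) * w (lbl X p.1) (lbl Y p.2)) + pathCost w X Y (q :: rest)

/-- A weight function `w : (Σ ∪ {ε})² → ℝ≥0` is normalized if `w(a, a) = 0` and
`w(a, b) ≥ 1` for distinct `a, b`. -/
def Normalized {α : Type*} (w : Option α → Option α → ℝ≥0) : Prop :=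
  (∀ a, w a a = 0) ∧ ∀ a b, a ≠ b → 1 ≤ w a b

/-- A weight function satisfies the triangle inequality (is a quasimetric). -/
def Quasimetric {α : Type*} (w : Option α → Option α → ℝ≥0) : Prop :=
  ∀ a b c, w a c ≤ w a b + w b c

/-- The weighted tree edit distance `ted^w(F[f..f'), G[g..g'))`: the minimum cost
of a forest alignment of the fragment `F[f..f')` onto the fragment `G[g..g')`
(`∞` if no forest alignment exists). -/
noncomputable def tedFrag {α : Type*} (w : Option α → Option α → ℝ≥0)
    (F G : List (Paren α)) (f f' g g' : ℕ) : ℝ≥0∞ :=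
  ⨅ p : { p : List (ℕ × ℕ) // IsAlignment f f' g g' p ∧ Consistent F G p },
    (pathCost w F G p.1 : ℝ≥0∞)

/-- The bounded tree edit distance `bted_k^w(F[f..f'), G[g..g'))`: the minimum
cost of a forest alignment of width at most `2k` (`∞` if none exists). -/
noncomputable def btedFrag {α : Type*} (k : ℕ) (w : Option α → Option α → ℝ≥0)
    (F G : List (Paren α)) (f f' g g' : ℕ) : ℝ≥0∞ :=
  ⨅ p : { p : List (ℕ × ℕ) //
      IsAlignment f f' g g' p ∧ Consistent F G p ∧ WidthLE (2 * k) p },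
    (pathCost w F G p.1 : ℝ≥0∞)

/-- The subforest of `F` induced by the fragment `F[i..j)`: obtained from
`F[i..j)` by deleting every parenthesis whose mate lies outside `[i..j)`. -/
noncomputable def induced {α : Type*} (F : List (Paren α)) (i j : ℕ) : List (Paren α) :=
  (List.range F.length).filterMap fun p =>
    if i ≤ p ∧ p < j ∧ ∃ q, i ≤ q ∧ q < j ∧ MateRel F p q then F[p]? else none

/-- The total `w̃`-cost of deleting the characters of `F[f..f')` whose mates lie
outside `[f..f')` and inserting the characters of `G[g..g')` whose mates lie
outside `[g..g')`. -/
noncomputable def straddleCost {α : Type*} (w : Option α → Option α → ℝ≥0)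
    (F G : List (Paren α)) (f f' g g' : ℕ) : ℝ≥0 :=
  (∑ i ∈ Finset.Ico f f',
      if ∃ q, f ≤ q ∧ q < f' ∧ MateRel F i q then 0
      else (1 / 2 : ℝ≥0) * w (lbl F i) none) +
  (∑ j ∈ Finset.Ico g g',
      if ∃ q, g ≤ q ∧ q < g' ∧ MateRel G j q then 0
      else (1 / 2 : ℝ≥0) * w none (lbl G j))

/-- The adjusted tree edit distance
`t̃ed^w(F[f..f'), G[g..g')) = min over forest alignments A of
(ted^w_A(F[f..f'), G[g..g')) − straddling cost)`. -/
noncomputable def tedTilde {α : Type*} (w : Option α → Option α → ℝ≥0)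
    (F G : List (Paren α)) (f f' g g' : ℕ) : ℝ≥0∞ :=
  ⨅ p : { p : List (ℕ × ℕ) // IsAlignment f f' g g' p ∧ Consistent F G p },
    ((pathCost w F G p.1 : ℝ≥0∞) - (straddleCost w F G f f' g g' : ℝ≥0∞))

/-!
Call a position of `F[f..f')` kept if its mate also lies in `[f..f')`, and send a kept position to
its rank among the kept positions: this identifies the kept positions with the positions of the
induced subforest, and it sends nodes to nodes, because mates never cross, so a node whose two ends
are kept has its whole interior kept. A forest alignment of the fragments aligns only kept
characters (it aligns their mates too), so it deletes or inserts every straddling character, at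
exactly the cost subtracted in `tedTilde`; its image under the rank maps is a forest alignment of
the induced subforests carrying the rest of the cost. Conversely, an alignment of the induced
subforests lifts back by deleting and inserting the straddling characters where they occur.
-/

section Depth

variable {α : Type*}

def parenSign (p : Paren α) : ℤ := if p.1 then 1 else -1

def parenDepth (S : List (Paren α)) (x : ℕ) : ℤ := ((S.take x).map parenSign).sum

@[simp] lemma parenDepth_zero (S : List (Paren α)) : parenDepth S 0 = 0 := rfl

lemma parenDepth_succ (S : List (Paren α)) (x : ℕ) :
    parenDepth S (x + 1) = parenDepth S x + S[x]?.elim 0 parenSign := by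
  unfold parenDepth
  rw [List.take_add_one, List.map_append, List.sum_append]
  cases S[x]? <;> simp

lemma parenDepth_cons_succ (p : Paren α) (S : List (Paren α)) (x : ℕ) :
    parenDepth (p :: S) (x + 1) = parenSign p + parenDepth S x := by
  simp [parenDepth]

lemma parenDepth_append (S T : List (Paren α)) (x : ℕ) :
    parenDepth (S ++ T) x = parenDepth S x + parenDepth T (x - S.length) := by
  simp [parenDepth, List.take_append]

lemma parenDepth_of_length_le (S : List (Paren α)) {x : ℕ} (h : S.length ≤ x) :
    parenDepth S x = parenDepth S S.length := by
  simp [parenDepth, List.take_of_length_le h]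

lemma parenDepth_frag (S : List (Paren α)) {a b t : ℕ} (h : a + t ≤ b) :
    parenDepth (frag S a b) t = parenDepth S (a + t) - parenDepth S a := by
  have hsplit : S.take (a + t) = S.take a ++ (frag S a b).take t := by
    conv_lhs => rw [← List.take_append_drop a (S.take (a + t))]
    rw [frag, List.take_drop, List.take_take, List.take_take, min_eq_left h,
      min_eq_left (Nat.le_add_right a t)]
  simp only [parenDepth, hsplit, List.map_append, List.sum_append]
  ring

lemma IsForest.parenDepth_balanced {S : List (Paren α)} (h : IsForest S) :
    parenDepth S S.length = 0 ∧ ∀ x, 0 ≤ parenDepth S x := by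
  induction h with
  | nil => exact ⟨rfl, fun x => by simp [parenDepth]⟩
  | append _ _ ihF ihG =>
    refine ⟨?_, fun x => ?_⟩
    · rw [List.length_append, parenDepth_append, parenDepth_of_length_le _ (by omega), ihF.1]
      simpa using ihG.1
    · rw [parenDepth_append]
      exact add_nonneg (ihF.2 x) (ihG.2 _)
  | @wrap F a _ ih =>
    have hwrap : ∀ x, parenDepth ((true, a) :: F ++ [(false, a)]) (x + 1)
        = 1 + parenDepth F x - if x ≤ F.length then 0 else 1 := by
      intro x
      rw [List.cons_append, parenDepth_cons_succ, parenDepth_append]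
      by_cases hx : x ≤ F.length
      · simp [Nat.sub_eq_zero_of_le hx, hx, parenSign]
      · obtain ⟨k, hk⟩ : ∃ k, x - F.length = k + 1 := ⟨x - F.length - 1, by omega⟩
        simp [hk, hx, parenSign, parenDepth]
    refine ⟨?_, fun x => ?_⟩
    · rw [show ((true, a) :: F ++ [(false, a)]).length = F.length + 1 + 1 by simp, hwrap,
        parenDepth_of_length_le _ (by omega), ih.1]
      simp
    · cases x with
      | zero => simp
      | succ n =>
        rw [hwrap n]
        by_cases hn : n ≤ F.length
        · simpa [hn] using (ih.2 n).trans (by omega)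
        · rw [parenDepth_of_length_le _ (by omega), ih.1]
          simp [hn]

end Depth

section Nodes

variable {α : Type*} {S : List (Paren α)}

structure DepthMatch (S : List (Paren α)) (i j : ℕ) : Prop where
  lt : i < j
  parenDepth_succ_right : parenDepth S (j + 1) = parenDepth S i
  parenDepth_lt : ∀ x, i < x → x ≤ j → parenDepth S i < parenDepth S x

lemma IsNode.depthMatch {i j : ℕ} (h : IsNode S i j) : DepthMatch S i j := by
  obtain ⟨hij, hj, ⟨a, hia, hja⟩, hfor⟩ := h
  have hbal := hfor.parenDepth_balanced
  have hdi : parenDepth S (i + 1) = parenDepth S i + 1 := by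
    simp [parenDepth_succ, hia, parenSign]
  have hdj : parenDepth S (j + 1) = parenDepth S j - 1 := by
    simp [parenDepth_succ, hja, parenSign, sub_eq_add_neg]
  have hinner : ∀ t, i + 1 + t ≤ j →
      parenDepth S (i + 1 + t) = parenDepth S (i + 1) + parenDepth (frag S (i + 1) j) t := by
    intro t ht
    rw [parenDepth_frag S ht]
    ring
  refine ⟨hij, ?_, fun x hx1 hx2 => ?_⟩
  · have := hinner (j - (i + 1)) (by omega)
    rw [show i + 1 + (j - (i + 1)) = j by omega,
      show j - (i + 1) = (frag S (i + 1) j).length by simp [frag]; omega, hbal.1] at this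
    omega
  · have := hinner (x - (i + 1)) (by omega)
    rw [show i + 1 + (x - (i + 1)) = x by omega] at this
    have := hbal.2 (x - (i + 1))
    omega

lemma DepthMatch.right_unique {i j j' : ℕ} (h : DepthMatch S i j) (h' : DepthMatch S i j') :
    j = j' := by
  by_contra hne
  rcases Nat.lt_or_gt_of_ne hne with hlt | hlt
  · have := h'.parenDepth_lt (j + 1) (by have := h.lt; omega) hlt
    rw [h.parenDepth_succ_right] at this
    omega
  · have := h.parenDepth_lt (j' + 1) (by have := h'.lt; omega) hlt
    rw [h'.parenDepth_succ_right] at this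
    omega

lemma DepthMatch.left_unique {i i' j : ℕ} (h : DepthMatch S i j) (h' : DepthMatch S i' j) :
    i = i' := by
  have hdepth : parenDepth S i = parenDepth S i' := by
    rw [← h.parenDepth_succ_right, h'.parenDepth_succ_right]
  by_contra hne
  rcases Nat.lt_or_gt_of_ne hne with hlt | hlt
  · have := h.parenDepth_lt i' hlt h'.lt.le
    omega
  · have := h'.parenDepth_lt i hlt h.lt.le
    omega

/-- The depth rises right after the left end of a match and falls right after its right end. -/
lemma DepthMatch.not_left_right {i j k : ℕ} (h : DepthMatch S i j) (h' : DepthMatch S k i) :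
    False := by
  have hup := h.parenDepth_lt (i + 1) (by omega) h.lt
  have hdown := h'.parenDepth_lt i h'.lt le_rfl
  rw [h'.parenDepth_succ_right] at hup
  omega

lemma MateRel.symm {i j : ℕ} (h : MateRel S i j) : MateRel S j i :=
  h.elim Or.inr Or.inl

lemma MateRel.unique {p q q' : ℕ} (h : MateRel S p q) (h' : MateRel S p q') : q = q' := by
  rcases h with h | h <;> rcases h' with h' | h'
  · exact h.depthMatch.right_unique h'.depthMatch
  · exact (h.depthMatch.not_left_right h'.depthMatch).elim
  · exact (h'.depthMatch.not_left_right h.depthMatch).elim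
  · exact h.depthMatch.left_unique h'.depthMatch

lemma IsNode.mate_mem_Ioo {x y z m : ℕ} (hxy : IsNode S x y) (hz : z ∈ Set.Ioo x y)
    (hm : MateRel S z m) : m ∈ Set.Ioo x y := by
  have hM := hxy.depthMatch
  obtain ⟨hxz, hzy⟩ := hz
  rcases hm with hzm | hmz
  · have hM' := hzm.depthMatch
    refine ⟨hxz.trans hM'.lt, lt_of_not_ge fun hym => ?_⟩
    rcases hym.eq_or_lt with rfl | hlt
    · exact (hxz.ne' (hM'.left_unique hM)).elim
    · have h1 := hM'.parenDepth_lt (y + 1) (by omega) hlt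
      have h2 := hM.parenDepth_lt z hxz hzy.le
      rw [hM.parenDepth_succ_right] at h1
      omega
  · have hM' := hmz.depthMatch
    refine ⟨lt_of_not_ge fun hmx => ?_, hM'.lt.trans hzy⟩
    rcases hmx.eq_or_lt with rfl | hlt
    · exact (hzy.ne (hM'.right_unique hM)).elim
    · have h1 := hM'.parenDepth_lt x hlt hxz.le
      have h2 := hM.parenDepth_lt (z + 1) (by omega) hzy
      rw [hM'.parenDepth_succ_right] at h2
      omega

lemma frag_append_of_le_length {T U : List (Paren α)} {a j : ℕ} (hj : j ≤ T.length) :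
    frag (T ++ U) a j = frag T a j := by
  simp [frag, List.take_append, Nat.sub_eq_zero_of_le hj]

lemma frag_append_length_add (T U : List (Paren α)) (a b : ℕ) :
    frag (T ++ U) (T.length + a) (T.length + b) = frag U a b := by
  simp [frag, List.take_append, List.drop_append]

lemma IsNode.append_right {T U : List (Paren α)} {i j : ℕ} (h : IsNode T i j) :
    IsNode (T ++ U) i j := by
  obtain ⟨hij, hj, ⟨a, hia, hja⟩, hfor⟩ := h
  refine ⟨hij, by simp; omega, ⟨a, ?_, ?_⟩, ?_⟩
  · rwa [List.getElem?_append_left (by omega)]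
  · rwa [List.getElem?_append_left hj]
  · rwa [frag_append_of_le_length hj.le]

lemma IsNode.append_left {T U : List (Paren α)} {i j : ℕ} (h : IsNode U i j) :
    IsNode (T ++ U) (T.length + i) (T.length + j) := by
  obtain ⟨hij, hj, ⟨a, hia, hja⟩, hfor⟩ := h
  refine ⟨by omega, by simp; omega, ⟨a, ?_, ?_⟩, ?_⟩
  · rwa [List.getElem?_append_right (by omega), Nat.add_sub_cancel_left]
  · rwa [List.getElem?_append_right (by omega), Nat.add_sub_cancel_left]
  · rwa [add_assoc, frag_append_length_add]

lemma IsForest.isNode_wrap_root {T : List (Paren α)} (hT : IsForest T) (a : α) :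
    IsNode ((true, a) :: T ++ [(false, a)]) 0 (T.length + 1) := by
  refine ⟨by omega, by simp, ⟨a, by simp, by simp⟩, ?_⟩
  simpa [frag, List.take_append] using hT

lemma IsNode.wrap {T : List (Paren α)} {i j : ℕ} (a : α) (h : IsNode T i j) :
    IsNode ((true, a) :: T ++ [(false, a)]) (i + 1) (j + 1) := by
  have h' := (h.append_right (U := [(false, a)])).append_left (T := [(true, a)])
  rwa [List.singleton_append, List.length_singleton, add_comm 1 i, add_comm 1 j] at h'

lemma IsForest.exists_mateRel (h : IsForest S) {p : ℕ} (hp : p < S.length) :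
    ∃ q, MateRel S p q := by
  induction h generalizing p with
  | nil => simp at hp
  | @append T U _ _ ihT ihU =>
    by_cases hpT : p < T.length
    · obtain ⟨q, hq⟩ := ihT hpT
      exact ⟨q, hq.imp IsNode.append_right IsNode.append_right⟩
    · obtain ⟨q, hq⟩ := ihU (p := p - T.length) (by simp at hp; omega)
      refine ⟨T.length + q, ?_⟩
      rw [show p = T.length + (p - T.length) by omega]
      exact hq.imp IsNode.append_left IsNode.append_left
  | @wrap T a hT ih =>
    simp only [List.cons_append, List.length_cons, List.length_append, List.length_nil] at hp
    rcases p with _ | p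
    · exact ⟨T.length + 1, Or.inl (hT.isNode_wrap_root a)⟩
    · by_cases hend : p = T.length
      · exact ⟨0, Or.inr (hend ▸ hT.isNode_wrap_root a)⟩
      · obtain ⟨q, hq⟩ := ih (p := p) (by omega)
        exact ⟨q + 1, hq.imp (IsNode.wrap a) (IsNode.wrap a)⟩

end Nodes

section Kept

variable {α : Type*} {F : List (Paren α)} {f f' x y : ℕ}

def Kept (F : List (Paren α)) (f f' p : ℕ) : Prop :=
  f ≤ p ∧ p < f' ∧ ∃ q, f ≤ q ∧ q < f' ∧ MateRel F p q

/-- The index of `F[x]` in `induced F f f'` when `x` is kept. -/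
noncomputable def keptRank (F : List (Paren α)) (f f' x : ℕ) : ℕ :=
  (List.range x).countP fun p => Kept F f f' p

lemma keptRank_succ (x : ℕ) :
    keptRank F f f' (x + 1) = keptRank F f f' x + if Kept F f f' x then 1 else 0 := by
  simp [keptRank, List.range_succ]

lemma keptRank_succ_of_kept (hx : Kept F f f' x) :
    keptRank F f f' (x + 1) = keptRank F f f' x + 1 := by
  rw [keptRank_succ, if_pos hx]

lemma keptRank_succ_of_not_kept (hx : ¬ Kept F f f' x) :
    keptRank F f f' (x + 1) = keptRank F f f' x := by
  rw [keptRank_succ, if_neg hx, add_zero]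

lemma keptRank_mono : Monotone (keptRank F f f') :=
  monotone_nat_of_le_succ fun x => by rw [keptRank_succ]; exact Nat.le_add_right _ _

lemma keptRank_lt_keptRank (hx : Kept F f f' x) (hxy : x < y) :
    keptRank F f f' x < keptRank F f f' y :=
  calc keptRank F f f' x < keptRank F f f' (x + 1) := by rw [keptRank_succ_of_kept hx]; omega
    _ ≤ keptRank F f f' y := keptRank_mono hxy

lemma keptRank_injOn (hx : Kept F f f' x) (hy : Kept F f f' y)
    (h : keptRank F f f' x = keptRank F f f' y) : x = y := by
  rcases lt_trichotomy x y with hlt | rfl | hlt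
  · exact absurd h (keptRank_lt_keptRank hx hlt).ne
  · rfl
  · exact absurd h (keptRank_lt_keptRank hy hlt).ne'

lemma keptRank_self_left : keptRank F f f' f = 0 :=
  List.countP_eq_zero.2 fun p hp => by
    simp only [List.mem_range] at hp
    simpa using fun h : Kept F f f' p => absurd h.1 (by omega)

lemma keptRank_of_le (hx : f' ≤ x) : keptRank F f f' x = keptRank F f f' f' := by
  induction x, hx using Nat.le_induction with
  | base => rfl
  | succ x hx ih => rw [keptRank_succ_of_not_kept fun h => by have := h.2.1; omega, ih]

lemma exists_kept_keptRank_eq {u n : ℕ} (hu : u < keptRank F f f' n) :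
    ∃ x, Kept F f f' x ∧ keptRank F f f' x = u := by
  induction n with
  | zero => simp [keptRank] at hu
  | succ n ih =>
    by_cases hn : Kept F f f' n
    · rw [keptRank_succ_of_kept hn] at hu
      rcases (Nat.lt_succ_iff.1 hu).lt_or_eq with hu | rfl
      · exact ih hu
      · exact ⟨n, hn, rfl⟩
    · rw [keptRank_succ_of_not_kept hn] at hu
      exact ih hu

lemma induced_eq_filterMap :
    induced F f f' = (List.range F.length).filterMap fun p =>
      if Kept F f f' p then F[p]? else none := by
  unfold induced Kept
  congr!

lemma length_filterMap_range_kept (hf' : f' ≤ F.length) (n : ℕ) :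
    ((List.range n).filterMap fun p => if Kept F f f' p then F[p]? else none).length =
      keptRank F f f' n := by
  rw [List.length_filterMap_eq_countP, keptRank]
  congr 1
  funext p
  by_cases hp : Kept F f f' p
  · have : p < F.length := hp.2.1.trans_le hf'
    simp [hp, this]
  · simp [hp]

lemma length_induced (hf' : f' ≤ F.length) : (induced F f f').length = keptRank F f f' f' := by
  rw [induced_eq_filterMap, ← keptRank_of_le hf', length_filterMap_range_kept hf']

lemma getElem?_induced_keptRank (hf' : f' ≤ F.length) (hx : Kept F f f' x) :
    (induced F f f')[keptRank F f f' x]? = F[x]? := by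
  have hxF : x < F.length := hx.2.1.trans_le hf'
  have hrange : List.range F.length =
      List.range x ++ [x] ++ (List.range (F.length - (x + 1))).map (x + 1 + ·) := by
    rw [← List.range_succ, ← List.range_add]
    congr 1
    omega
  rw [induced_eq_filterMap, hrange, List.filterMap_append, List.filterMap_append,
    ← length_filterMap_range_kept hf' x, List.append_assoc, List.getElem?_append_right le_rfl,
    Nat.sub_self]
  simp [hx, hxF]

end Kept

section InducedNodes

variable {α : Type*} {F : List (Paren α)} {f f' x y : ℕ}

lemma Kept.of_mateRel (hx : Kept F f f' x) (hm : MateRel F x y) : Kept F f f' y := by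
  obtain ⟨hfx, hxf, q, hfq, hqf, hq⟩ := hx
  obtain rfl := hm.unique hq
  exact ⟨hfq, hqf, x, hfx, hxf, hq.symm⟩

lemma Kept.of_isNode_of_mem_Ioo (hF : IsForest F) (hf' : f' ≤ F.length) (hxy : IsNode F x y)
    (hx : Kept F f f' x) (hy : Kept F f f' y) {z : ℕ} (hz : z ∈ Set.Ioo x y) : Kept F f f' z := by
  obtain ⟨hfx, -⟩ := hx
  obtain ⟨-, hyf', -⟩ := hy
  obtain ⟨m, hm⟩ := hF.exists_mateRel (p := z) (by simp only [Set.mem_Ioo] at hz; omega)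
  have hmxy := hxy.mate_mem_Ioo hz hm
  simp only [Set.mem_Ioo] at hz hmxy
  exact ⟨by omega, by omega, m, by omega, by omega, hm⟩

lemma keptRank_eq_add_of_forall_kept (hxy : x ≤ y) (h : ∀ z, x ≤ z → z < y → Kept F f f' z) :
    keptRank F f f' y = keptRank F f f' x + (y - x) := by
  induction y, hxy using Nat.le_induction with
  | base => simp
  | succ y hy ih =>
    rw [keptRank_succ_of_kept (h y hy (by omega)), ih fun z hz1 hz2 => h z hz1 (by omega)]
    omega

lemma getElem?_frag {β : Type*} (l : List β) (a b t : ℕ) :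
    (frag l a b)[t]? = if a + t < b then l[a + t]? else none := by
  rw [frag, List.getElem?_drop, List.getElem?_take]

lemma IsNode.induced (hF : IsForest F) (hf' : f' ≤ F.length) (hxy : IsNode F x y)
    (hx : Kept F f f' x) (hy : Kept F f f' y) :
    IsNode (induced F f f') (keptRank F f f' x) (keptRank F f f' y) := by
  have hkept : ∀ z, x ≤ z → z < y → Kept F f f' z := fun z hz1 hz2 =>
    hz1.eq_or_lt.elim (· ▸ hx) fun hlt => hx.of_isNode_of_mem_Ioo hF hf' hxy hy ⟨hlt, hz2⟩
  have hrank : ∀ t, x + t ≤ y → keptRank F f f' (x + t) = keptRank F f f' x + t := fun t ht => by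
    rw [keptRank_eq_add_of_forall_kept (by omega) fun z hz1 hz2 => hkept z hz1 (by omega)]
    omega
  obtain ⟨hlt, -, ⟨a, hxa, hya⟩, hfor⟩ := hxy
  have hry := hrank (y - x) (by omega)
  rw [Nat.add_sub_cancel' hlt.le] at hry
  refine ⟨by omega, ?_, ⟨a, ?_, ?_⟩, ?_⟩
  · rw [length_induced hf']
    exact keptRank_lt_keptRank hy hy.2.1
  · rwa [getElem?_induced_keptRank hf' hx]
  · rwa [getElem?_induced_keptRank hf' hy]
  · convert hfor using 1
    refine List.ext_getElem? fun t => ?_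
    rw [getElem?_frag, getElem?_frag]
    by_cases ht : x + 1 + t < y
    · have hrank' : keptRank F f f' x + 1 + t = keptRank F f f' (x + 1 + t) := by
        rw [add_assoc x, hrank _ (by omega)]
        ring
      rw [if_pos (by omega), if_pos ht, hrank',
        getElem?_induced_keptRank hf' (hkept _ (by omega) ht)]
    · rw [if_neg (by omega), if_neg ht]

lemma MateRel.induced (hF : IsForest F) (hf' : f' ≤ F.length) (hxy : MateRel F x y)
    (hx : Kept F f f' x) (hy : Kept F f f' y) :
    MateRel (induced F f f') (keptRank F f f' x) (keptRank F f f' y) :=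
  hxy.imp (·.induced hF hf' hx hy) (·.induced hF hf' hy hx)

lemma exists_kept_of_mateRel_induced (hF : IsForest F) (hf' : f' ≤ F.length) {u v : ℕ}
    (h : MateRel (induced F f f') u v) :
    ∃ a b, Kept F f f' a ∧ Kept F f f' b ∧ MateRel F a b ∧
      keptRank F f f' a = u ∧ keptRank F f f' b = v := by
  have hu : u < keptRank F f f' f' := by
    rw [← length_induced hf']
    rcases h with h | h <;> · have := h.1; have := h.2.1; omega
  obtain ⟨a, ha, rfl⟩ := exists_kept_keptRank_eq hu
  obtain ⟨-, -, b, -, -, hab⟩ := id ha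
  have hb := ha.of_mateRel hab
  exact ⟨a, b, ha, hb, hab, rfl, (h.unique (hab.induced hF hf' ha hb)).symm⟩

lemma lbl_induced_keptRank (hf' : f' ≤ F.length) (hx : Kept F f f' x) :
    lbl (induced F f f') (keptRank F f f' x) = lbl F x := by
  rw [lbl, getElem?_induced_keptRank hf' hx, lbl]

end InducedNodes

section Paths

variable {α : Type*} {l p : List (ℕ × ℕ)} {x x' y y' a b : ℕ}

lemma isAlignment_singleton_iff {v : ℕ × ℕ} :
    IsAlignment x x' y y' [v] ↔ v = (x, y) ∧ v = (x', y') := by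
  simp only [IsAlignment, List.head?_cons, List.getLast?_singleton, Option.some.injEq]
  exact ⟨fun h => ⟨h.1, h.2.1⟩, fun h => ⟨h.1, h.2, List.isChain_singleton _⟩⟩

lemma isAlignment_cons_cons_iff {v v' : ℕ × ℕ} {r : List (ℕ × ℕ)} :
    IsAlignment x x' y y' (v :: v' :: r) ↔
      v = (x, y) ∧ AlignStep v v' ∧ IsAlignment v'.1 x' v'.2 y' (v' :: r) := by
  simp only [IsAlignment, List.head?_cons, List.getLast?_cons_cons, Option.some.injEq]
  exact ⟨fun ⟨h1, h2, h3⟩ => ⟨h1, (List.isChain_cons_cons.1 h3).1, trivial, h2,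
    (List.isChain_cons_cons.1 h3).2⟩,
    fun ⟨h1, h2, _, h4, h5⟩ => ⟨h1, h4, List.isChain_cons_cons.2 ⟨h2, h5⟩⟩⟩

lemma IsAlignment.cons {x₁ y₁ : ℕ} (h : IsAlignment x₁ x' y₁ y' l)
    (hs : AlignStep (x, y) (x₁, y₁)) : IsAlignment x x' y y' ((x, y) :: l) := by
  cases l with
  | nil => simp [IsAlignment] at h
  | cons v r =>
    obtain rfl : v = (x₁, y₁) := by simpa [IsAlignment] using h.1
    exact isAlignment_cons_cons_iff.2 ⟨rfl, hs, h⟩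

lemma IsAlignment.bounds_of_mem (h : IsAlignment x x' y y' p) {v : ℕ × ℕ} (hv : v ∈ p) :
    x ≤ v.1 ∧ y ≤ v.2 ∧ v.1 ≤ x' ∧ v.2 ≤ y' := by
  induction p generalizing x y v with
  | nil => simp at hv
  | cons v₀ r ih =>
    cases r with
    | nil =>
      obtain ⟨rfl, h'⟩ := isAlignment_singleton_iff.1 h
      obtain rfl := List.mem_singleton.1 hv
      simp only [Prod.mk.injEq] at h'
      omega
    | cons v' r =>
      obtain ⟨rfl, hs, htail⟩ := isAlignment_cons_cons_iff.1 h
      have hv' := ih htail List.mem_cons_self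
      rcases List.mem_cons.1 hv with rfl | hv
      · rcases hs with rfl | rfl | rfl <;> simp at hv' ⊢ <;> omega
      · have := ih htail hv
        rcases hs with rfl | rfl | rfl <;> simp at this ⊢ <;> omega

lemma IsAlignment.le (h : IsAlignment x x' y y' p) : x ≤ x' ∧ y ≤ y' := by
  have hx := h.bounds_of_mem (List.mem_of_mem_head? h.1)
  exact ⟨hx.2.2.1, hx.2.2.2⟩

lemma IsAlignment.bounds_of_alignsAt (h : IsAlignment x x' y y' p) (hab : AlignsAt p a b) :
    x ≤ a ∧ a < x' ∧ y ≤ b ∧ b < y' := by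
  obtain ⟨t, h1, h2⟩ := hab
  have := h.bounds_of_mem (List.mem_of_getElem? h1)
  have := h.bounds_of_mem (List.mem_of_getElem? h2)
  simp only at *
  omega

lemma not_alignsAt_singleton {v : ℕ × ℕ} : ¬ AlignsAt [v] a b := by
  rintro ⟨t, -, h⟩
  simp at h

lemma alignsAt_cons_iff {v v' : ℕ × ℕ} (hl : l.head? = some v') :
    AlignsAt (v :: l) a b ↔ (v = (a, b) ∧ v' = (a + 1, b + 1)) ∨ AlignsAt l a b := by
  cases l with
  | nil => simp at hl
  | cons v₀ r =>
    obtain rfl : v₀ = v' := by simpa using hl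
    constructor
    · rintro ⟨_ | t, h1, h2⟩
      · simp_all
      · exact Or.inr ⟨t, h1, h2⟩
    · rintro (⟨rfl, rfl⟩ | ⟨t, h1, h2⟩)
      · exact ⟨0, rfl, rfl⟩
      · exact ⟨t + 1, h1, h2⟩

lemma alignsAt_cons_horizontal (hl : l.head? = some (x + 1, y)) :
    AlignsAt ((x, y) :: l) a b ↔ AlignsAt l a b := by
  rw [alignsAt_cons_iff hl, or_iff_right]
  simp only [Prod.mk.injEq]
  omega

lemma alignsAt_cons_vertical (hl : l.head? = some (x, y + 1)) :
    AlignsAt ((x, y) :: l) a b ↔ AlignsAt l a b := by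
  rw [alignsAt_cons_iff hl, or_iff_right]
  simp only [Prod.mk.injEq]
  omega

lemma alignsAt_cons_diagonal (hl : l.head? = some (x + 1, y + 1)) :
    AlignsAt ((x, y) :: l) a b ↔ (a = x ∧ b = y) ∨ AlignsAt l a b := by
  rw [alignsAt_cons_iff hl]
  simp only [Prod.mk.injEq]
  constructor <;> rintro (h | h) <;> first | exact Or.inr h | (left; omega)

variable (w : Option α → Option α → ℝ≥0) (X Y : List (Paren α))

lemma pathCost_cons_of_head?_eq {v v' : ℕ × ℕ} (hl : l.head? = some v') :
    pathCost w X Y (v :: l) = pathCost w X Y [v, v'] + pathCost w X Y l := by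
  cases l with
  | nil => simp at hl
  | cons v₀ r =>
    obtain rfl : v₀ = v' := by simpa using hl
    simp [pathCost]

@[simp] lemma pathCost_horizontal :
    pathCost w X Y [(x, y), (x + 1, y)] = 1 / 2 * w (lbl X x) none := by
  simp [pathCost]

@[simp] lemma pathCost_vertical :
    pathCost w X Y [(x, y), (x, y + 1)] = 1 / 2 * w none (lbl Y y) := by
  simp [pathCost]

@[simp] lemma pathCost_diagonal :
    pathCost w X Y [(x, y), (x + 1, y + 1)] = 1 / 2 * w (lbl X x) (lbl Y y) := by
  simp [pathCost]

end Paths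

section Lift

variable {α : Type*}

noncomputable def straddleSum (F : List (Paren α)) (f f' x : ℕ) (c : ℕ → ℝ≥0) : ℝ≥0 :=
  ∑ i ∈ Finset.Ico x f', if Kept F f f' i then 0 else c i

section StraddleSum

variable {F : List (Paren α)} {f f' x : ℕ} {c : ℕ → ℝ≥0}

@[simp] lemma straddleSum_self : straddleSum F f f' f' c = 0 := by
  simp [straddleSum]

lemma straddleSum_of_kept (hx : Kept F f f' x) :
    straddleSum F f f' x c = straddleSum F f f' (x + 1) c := by
  rw [straddleSum, Finset.sum_eq_sum_Ico_succ_bot hx.2.1, if_pos hx, zero_add, straddleSum]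

lemma straddleSum_of_not_kept (hx : x < f') (hnk : ¬ Kept F f f' x) :
    straddleSum F f f' x c = c x + straddleSum F f f' (x + 1) c := by
  rw [straddleSum, Finset.sum_eq_sum_Ico_succ_bot hx, if_neg hnk, straddleSum]

end StraddleSum

lemma straddleCost_eq (w : Option α → Option α → ℝ≥0) (F G : List (Paren α)) (f f' g g' : ℕ) :
    straddleCost w F G f f' g g' = straddleSum F f f' f (fun i => 1 / 2 * w (lbl F i) none) +
      straddleSum G g g' g (fun j => 1 / 2 * w none (lbl G j)) := by
  unfold straddleCost straddleSum Kept
  congr 1 <;> refine Finset.sum_congr rfl fun i hi => ?_ <;> rw [Finset.mem_Ico] at hi <;>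
    simp only [hi, true_and]

variable (w : Option α → Option α → ℝ≥0) (F G : List (Paren α)) (f f' g g' : ℕ)

/-- `p` is an alignment of `F[x..f')` onto `G[y..g')` and `q` is its image in the induced
subforests: `p` deletes and inserts the straddling characters, and otherwise `p` and `q` make the
same edits, matched up by the rank maps. -/
structure IsLift (x y : ℕ) (p q : List (ℕ × ℕ)) : Prop where
  isAlignment : IsAlignment x f' y g' p
  isAlignment_induced : IsAlignment (keptRank F f f' x) (keptRank F f f' f')
    (keptRank G g g' y) (keptRank G g g' g') q
  pathCost_eq : pathCost w F G p = pathCost w (induced F f f') (induced G g g') q +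
    straddleSum F f f' x (fun i => 1 / 2 * w (lbl F i) none) +
    straddleSum G g g' y (fun j => 1 / 2 * w none (lbl G j))
  kept_of_alignsAt : ∀ a b, AlignsAt p a b → Kept F f f' a ∧ Kept G g g' b
  alignsAt_iff : ∀ a b, Kept F f f' a → Kept G g g' b →
    (AlignsAt p a b ↔ AlignsAt q (keptRank F f f' a) (keptRank G g g' b))

variable {w F G f f' g g'} {x y : ℕ} {p q : List (ℕ × ℕ)}

lemma isLift_singleton :
    IsLift w F G f f' g g' f' g' [(f', g')] [(keptRank F f f' f', keptRank G g g' g')] where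
  isAlignment := isAlignment_singleton_iff.2 ⟨rfl, rfl⟩
  isAlignment_induced := isAlignment_singleton_iff.2 ⟨rfl, rfl⟩
  pathCost_eq := by simp [pathCost]
  kept_of_alignsAt _ _ h := (not_alignsAt_singleton h).elim
  alignsAt_iff _ _ _ _ := iff_of_false not_alignsAt_singleton not_alignsAt_singleton

namespace IsLift

lemma cons_horizontal_of_not_kept (h : IsLift w F G f f' g g' (x + 1) y p q)
    (hx : ¬ Kept F f f' x) : IsLift w F G f f' g g' x y ((x, y) :: p) q := by
  have hp := h.isAlignment.1
  refine ⟨h.isAlignment.cons (Or.inl rfl), keptRank_succ_of_not_kept hx ▸ h.isAlignment_induced,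
    ?_, fun a b hab => h.kept_of_alignsAt a b ((alignsAt_cons_horizontal hp).1 hab),
    fun a b ha hb => (alignsAt_cons_horizontal hp).trans (h.alignsAt_iff a b ha hb)⟩
  rw [pathCost_cons_of_head?_eq w F G hp, pathCost_horizontal, h.pathCost_eq,
    straddleSum_of_not_kept (Nat.lt_of_succ_le h.isAlignment.le.1) hx]
  ring

lemma cons_vertical_of_not_kept (h : IsLift w F G f f' g g' x (y + 1) p q)
    (hy : ¬ Kept G g g' y) : IsLift w F G f f' g g' x y ((x, y) :: p) q := by
  have hp := h.isAlignment.1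
  refine ⟨h.isAlignment.cons (Or.inr (Or.inl rfl)),
    keptRank_succ_of_not_kept hy ▸ h.isAlignment_induced,
    ?_, fun a b hab => h.kept_of_alignsAt a b ((alignsAt_cons_vertical hp).1 hab),
    fun a b ha hb => (alignsAt_cons_vertical hp).trans (h.alignsAt_iff a b ha hb)⟩
  rw [pathCost_cons_of_head?_eq w F G hp, pathCost_vertical, h.pathCost_eq,
    straddleSum_of_not_kept (Nat.lt_of_succ_le h.isAlignment.le.2) hy]
  ring

lemma cons_horizontal_of_kept (hf' : f' ≤ F.length) (h : IsLift w F G f f' g g' (x + 1) y p q)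
    (hx : Kept F f f' x) :
    IsLift w F G f f' g g' x y ((x, y) :: p) ((keptRank F f f' x, keptRank G g g' y) :: q) := by
  have hp := h.isAlignment.1
  have hq := h.isAlignment_induced
  rw [keptRank_succ_of_kept hx] at hq
  refine ⟨h.isAlignment.cons (Or.inl rfl), hq.cons (Or.inl rfl), ?_,
    fun a b hab => h.kept_of_alignsAt a b ((alignsAt_cons_horizontal hp).1 hab),
    fun a b ha hb => (alignsAt_cons_horizontal hp).trans
      ((h.alignsAt_iff a b ha hb).trans (alignsAt_cons_horizontal hq.1).symm)⟩
  rw [pathCost_cons_of_head?_eq w F G hp, pathCost_cons_of_head?_eq _ _ _ hq.1, pathCost_horizontal,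
    pathCost_horizontal, lbl_induced_keptRank hf' hx, h.pathCost_eq, straddleSum_of_kept hx]
  ring

lemma cons_vertical_of_kept (hg' : g' ≤ G.length) (h : IsLift w F G f f' g g' x (y + 1) p q)
    (hy : Kept G g g' y) :
    IsLift w F G f f' g g' x y ((x, y) :: p) ((keptRank F f f' x, keptRank G g g' y) :: q) := by
  have hp := h.isAlignment.1
  have hq := h.isAlignment_induced
  rw [keptRank_succ_of_kept hy] at hq
  refine ⟨h.isAlignment.cons (Or.inr (Or.inl rfl)), hq.cons (Or.inr (Or.inl rfl)), ?_,
    fun a b hab => h.kept_of_alignsAt a b ((alignsAt_cons_vertical hp).1 hab),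
    fun a b ha hb => (alignsAt_cons_vertical hp).trans
      ((h.alignsAt_iff a b ha hb).trans (alignsAt_cons_vertical hq.1).symm)⟩
  rw [pathCost_cons_of_head?_eq w F G hp, pathCost_cons_of_head?_eq _ _ _ hq.1, pathCost_vertical,
    pathCost_vertical, lbl_induced_keptRank hg' hy, h.pathCost_eq, straddleSum_of_kept hy]
  ring

lemma cons_diagonal (hf' : f' ≤ F.length) (hg' : g' ≤ G.length)
    (h : IsLift w F G f f' g g' (x + 1) (y + 1) p q) (hx : Kept F f f' x) (hy : Kept G g g' y) :
    IsLift w F G f f' g g' x y ((x, y) :: p) ((keptRank F f f' x, keptRank G g g' y) :: q) := by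
  have hp := h.isAlignment.1
  have hq := h.isAlignment_induced
  rw [keptRank_succ_of_kept hx, keptRank_succ_of_kept hy] at hq
  refine ⟨h.isAlignment.cons (Or.inr (Or.inr rfl)), hq.cons (Or.inr (Or.inr rfl)), ?_,
    fun a b hab => ?_, fun a b ha hb => ?_⟩
  · rw [pathCost_cons_of_head?_eq w F G hp, pathCost_cons_of_head?_eq _ _ _ hq.1, pathCost_diagonal,
      pathCost_diagonal, lbl_induced_keptRank hf' hx, lbl_induced_keptRank hg' hy, h.pathCost_eq,
      straddleSum_of_kept hx, straddleSum_of_kept hy]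
    ring
  · rcases (alignsAt_cons_diagonal hp).1 hab with ⟨rfl, rfl⟩ | hab
    · exact ⟨hx, hy⟩
    · exact h.kept_of_alignsAt a b hab
  · rw [alignsAt_cons_diagonal hp, alignsAt_cons_diagonal hq.1, h.alignsAt_iff a b ha hb]
    refine or_congr_left ⟨fun ⟨hax, hby⟩ => ⟨hax ▸ rfl, hby ▸ rfl⟩, fun ⟨hax, hby⟩ => ?_⟩
    exact ⟨keptRank_injOn ha hx hax, keptRank_injOn hb hy hby⟩

end IsLift

lemma exists_isLift_of_isAlignment (hf' : f' ≤ F.length) (hg' : g' ≤ G.length)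
    (hp : IsAlignment x f' y g' p)
    (hkept : ∀ a b, AlignsAt p a b → Kept F f f' a ∧ Kept G g g' b) :
    ∃ q, IsLift w F G f f' g g' x y p q := by
  induction p generalizing x y with
  | nil => simp [IsAlignment] at hp
  | cons v r ih =>
    cases r with
    | nil =>
      obtain ⟨rfl, h⟩ := isAlignment_singleton_iff.1 hp
      obtain ⟨rfl, rfl⟩ := Prod.mk.inj h
      exact ⟨_, isLift_singleton⟩
    | cons v' r =>
      obtain ⟨rfl, hstep, htail⟩ := isAlignment_cons_cons_iff.1 hp
      have hhead : (v' :: r).head? = some v' := rfl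
      obtain ⟨q, hq⟩ := ih htail fun a b hab => hkept a b ((alignsAt_cons_iff hhead).2 (Or.inr hab))
      rcases hstep with rfl | rfl | rfl
      · by_cases hx : Kept F f f' x
        · exact ⟨_, hq.cons_horizontal_of_kept hf' hx⟩
        · exact ⟨_, hq.cons_horizontal_of_not_kept hx⟩
      · by_cases hy : Kept G g g' y
        · exact ⟨_, hq.cons_vertical_of_kept hg' hy⟩
        · exact ⟨_, hq.cons_vertical_of_not_kept hy⟩
      · obtain ⟨hx, hy⟩ := hkept x y ((alignsAt_cons_iff hhead).2 (Or.inl ⟨rfl, rfl⟩))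
        exact ⟨_, hq.cons_diagonal hf' hg' hx hy⟩

lemma exists_isLift_of_isAlignment_induced (hf' : f' ≤ F.length) (hg' : g' ≤ G.length)
    {q : List (ℕ × ℕ)} {x y : ℕ} (hx : x ≤ f') (hy : y ≤ g')
    (hq : IsAlignment (keptRank F f f' x) (keptRank F f f' f')
      (keptRank G g g' y) (keptRank G g g' g') q) :
    ∃ p, IsLift w F G f f' g g' x y p q := by
  by_cases hxk : x < f' ∧ ¬ Kept F f f' x
  · rw [← keptRank_succ_of_not_kept hxk.2] at hq
    obtain ⟨p, hp⟩ := exists_isLift_of_isAlignment_induced hf' hg' hxk.1 hy hq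
    exact ⟨_, hp.cons_horizontal_of_not_kept hxk.2⟩
  by_cases hyk : y < g' ∧ ¬ Kept G g g' y
  · rw [← keptRank_succ_of_not_kept hyk.2] at hq
    obtain ⟨p, hp⟩ := exists_isLift_of_isAlignment_induced hf' hg' hx hyk.1 hq
    exact ⟨_, hp.cons_vertical_of_not_kept hyk.2⟩
  have hxk : x < f' → Kept F f f' x := by tauto
  have hyk : y < g' → Kept G g g' y := by tauto
  match q, hq with
  | [v], hq =>
    obtain ⟨rfl, h⟩ := isAlignment_singleton_iff.1 hq
    obtain ⟨hxr, hyr⟩ := Prod.mk.inj h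
    obtain rfl : x = f' := hx.eq_or_lt.resolve_right fun hlt =>
      (keptRank_lt_keptRank (hxk hlt) hlt).ne hxr
    obtain rfl : y = g' := hy.eq_or_lt.resolve_right fun hlt =>
      (keptRank_lt_keptRank (hyk hlt) hlt).ne hyr
    exact ⟨_, isLift_singleton⟩
  | v :: v' :: r, hq =>
    obtain ⟨rfl, hstep, htail⟩ := isAlignment_cons_cons_iff.1 hq
    have hle := htail.le
    rcases hstep with rfl | rfl | rfl
    · have hxf : x < f' := hx.lt_of_ne fun hxf => by subst hxf; simp at hle
      obtain ⟨p, hp⟩ := exists_isLift_of_isAlignment_induced hf' hg' hxf hy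
        (q := (keptRank F f f' x + 1, keptRank G g g' y) :: r)
        (by rwa [keptRank_succ_of_kept (hxk hxf)])
      exact ⟨_, hp.cons_horizontal_of_kept hf' (hxk hxf)⟩
    · have hyg : y < g' := hy.lt_of_ne fun hyg => by subst hyg; simp at hle
      obtain ⟨p, hp⟩ := exists_isLift_of_isAlignment_induced hf' hg' hx hyg
        (q := (keptRank F f f' x, keptRank G g g' y + 1) :: r)
        (by rwa [keptRank_succ_of_kept (hyk hyg)])
      exact ⟨_, hp.cons_vertical_of_kept hg' (hyk hyg)⟩
    · have hxf : x < f' := hx.lt_of_ne fun hxf => by subst hxf; simp at hle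
      have hyg : y < g' := hy.lt_of_ne fun hyg => by subst hyg; simp at hle
      obtain ⟨p, hp⟩ := exists_isLift_of_isAlignment_induced hf' hg' hxf hyg
        (q := (keptRank F f f' x + 1, keptRank G g g' y + 1) :: r)
        (by rwa [keptRank_succ_of_kept (hxk hxf), keptRank_succ_of_kept (hyk hyg)])
      exact ⟨_, hp.cons_diagonal hf' hg' (hxk hxf) (hyk hyg)⟩
termination_by (f' - x) + (g' - y) + q.length

/-- A forest alignment also aligns the mates of aligned characters, so they lie in the fragments. -/
lemma Consistent.kept_of_alignsAt (hF : IsForest F) (hG : IsForest G) (hf' : f' ≤ F.length)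
    (hg' : g' ≤ G.length) (hp : IsAlignment f f' g g' p) (hc : Consistent F G p) {a b : ℕ}
    (hab : AlignsAt p a b) : Kept F f f' a ∧ Kept G g g' b := by
  obtain ⟨hfa, haf, hgb, hbg⟩ := hp.bounds_of_alignsAt hab
  obtain ⟨a', ha⟩ := hF.exists_mateRel (p := a) (by omega)
  obtain ⟨b', hb⟩ := hG.exists_mateRel (p := b) (by omega)
  obtain ⟨hfa', ha'f, hgb', hb'g⟩ := hp.bounds_of_alignsAt (hc a b a' b' hab ha hb)
  exact ⟨⟨hfa, haf, a', hfa', ha'f, ha⟩, ⟨hgb, hbg, b', hgb', hb'g, hb⟩⟩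

namespace IsLift

lemma consistent (hF : IsForest F) (hG : IsForest G) (hf' : f' ≤ F.length) (hg' : g' ≤ G.length)
    (h : IsLift w F G f f' g g' x y p q) (hq : Consistent (induced F f f') (induced G g g') q) :
    Consistent F G p := by
  intro a b a' b' hab ha hb
  obtain ⟨hka, hkb⟩ := h.kept_of_alignsAt a b hab
  have hka' := hka.of_mateRel ha
  have hkb' := hkb.of_mateRel hb
  rw [h.alignsAt_iff a' b' hka' hkb']
  exact hq _ _ _ _ ((h.alignsAt_iff a b hka hkb).1 hab) (ha.induced hF hf' hka hka')
    (hb.induced hG hg' hkb hkb')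

lemma consistent_induced (hF : IsForest F) (hG : IsForest G) (hf' : f' ≤ F.length)
    (hg' : g' ≤ G.length) (h : IsLift w F G f f' g g' x y p q) (hp : Consistent F G p) :
    Consistent (induced F f f') (induced G g g') q := by
  intro u v u' v' huv hu hv
  obtain ⟨a, a', ha, ha', haa', rfl, rfl⟩ := exists_kept_of_mateRel_induced hF hf' hu
  obtain ⟨b, b', hb, hb', hbb', rfl, rfl⟩ := exists_kept_of_mateRel_induced hG hg' hv
  exact (h.alignsAt_iff a' b' ha' hb').1 (hp a b a' b' ((h.alignsAt_iff a b ha hb).2 huv) haa' hbb')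

lemma coe_pathCost_sub_straddleCost (h : IsLift w F G f f' g g' f g p q) :
    (pathCost w F G p : ℝ≥0∞) - straddleCost w F G f f' g g' =
      pathCost w (induced F f f') (induced G g g') q := by
  rw [h.pathCost_eq, straddleCost_eq, add_assoc, ENNReal.coe_add,
    ENNReal.add_sub_cancel_right ENNReal.coe_ne_top]

end IsLift

end Lift

/-- Observation 2.8: for all forests `F, G`, fragments
`F[f..f')` and `G[g..g')`, and weight functions `w`, the adjusted tree edit
distance of the fragments equals the tree edit distance of the induced
subforests. -/
theorem tedTilde_eq_ted_induced {α : Type*} (F G : List (Paren α))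
    (hF : IsForest F) (hG : IsForest G)
    (f f' g g' : ℕ) (hf : f ≤ f') (hf' : f' ≤ F.length) (hg : g ≤ g') (hg' : g' ≤ G.length)
    (w : Option α → Option α → ℝ≥0) :
    tedTilde w F G f f' g g' =
      tedFrag w (induced F f f') (induced G g g')
        0 (induced F f f').length 0 (induced G g g').length := by
  have hends : ∀ q, IsAlignment 0 (induced F f f').length 0 (induced G g g').length q ↔
      IsAlignment (keptRank F f f' f) (keptRank F f f' f') (keptRank G g g' g)
        (keptRank G g g' g') q := by
    simp [keptRank_self_left, length_induced hf', length_induced hg']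
  apply le_antisymm
  · refine le_iInf fun ⟨q, hq, hqc⟩ => ?_
    obtain ⟨p, hp⟩ := exists_isLift_of_isAlignment_induced (w := w) hf' hg' hf hg ((hends q).1 hq)
    exact iInf_le_of_le ⟨p, hp.isAlignment, hp.consistent hF hG hf' hg' hqc⟩
      hp.coe_pathCost_sub_straddleCost.le
  · refine le_iInf fun ⟨p, hp, hpc⟩ => ?_
    obtain ⟨q, hq⟩ := exists_isLift_of_isAlignment (w := w) hf' hg' hp
      fun a b hab => hpc.kept_of_alignsAt hF hG hf' hg' hp hab
    exact iInf_le_of_le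
      ⟨q, (hends q).2 hq.isAlignment_induced, hq.consistent_induced hF hG hf' hg' hpc⟩
      hq.coe_pathCost_sub_straddleCost.ge
end

section
/- Let w : (Σ∪{ε})² → ℝ≥0 be a normalized weight function, k ∈ ℤ+ a threshold, and F, G ∈ F_Σ forests. If ted^w(F,G) ≤ k, then ted^w(F,G) = bted_k^w(F,G), where bted_k^w(F,G) is the minimum cost over forest alignments of F onto G of width at most 2k. -/
/-! Under a normalized weight every non-diagonal edge of the alignment graph costs at least `½`,
and only non-diagonal edges change `x - y`, by one each. Hence an alignment of cost below
`k + ½` has at most `2k` non-diagonal edges and width at most `2k`; as `ted ≤ k`, forest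
alignments of cost arbitrarily close to `ted` are of this kind. -/

open scoped NNReal ENNReal

attribute [local instance] Classical.propDecidable

def nonDiagCount : List (ℕ × ℕ) → ℕ
  | [] => 0
  | [_] => 0
  | p :: q :: rest => (if q = (p.1 + 1, p.2 + 1) then 0 else 1) + nonDiagCount (q :: rest)

lemma AlignStep.le {p q : ℕ × ℕ} (h : AlignStep p q) : p ≤ q := by
  rcases h with rfl | rfl | rfl <;> simp [Prod.le_def]

lemma le_of_mem_of_getLast?_eq {l : List (ℕ × ℕ)} {q r : ℕ × ℕ} (hc : l.IsChain AlignStep)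
    (hr : l.getLast? = some r) (hq : q ∈ l) : q ≤ r := by
  obtain ⟨ys, rfl⟩ := List.getLast?_eq_some_iff.mp hr
  have hpw : (ys ++ [r]).Pairwise (· ≤ ·) := (hc.imp fun _ _ => AlignStep.le).pairwise
  rcases List.mem_append.mp hq with hq | hq
  · exact hpw.rel_of_mem_append hq (List.mem_singleton_self r)
  · exact le_of_eq (List.mem_singleton.mp hq)

lemma nonDiagCount_cons_cons (p q : ℕ × ℕ) (rest : List (ℕ × ℕ)) :
    nonDiagCount (p :: q :: rest) =
      (if q = (p.1 + 1, p.2 + 1) then 0 else 1) + nonDiagCount (q :: rest) :=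
  rfl

lemma pathCost_cons_cons {α : Type*} (w : Option α → Option α → ℝ≥0) (X Y : List (Paren α))
    (p q : ℕ × ℕ) (rest : List (ℕ × ℕ)) :
    pathCost w X Y (p :: q :: rest) =
      (if q.1 = p.1 + 1 ∧ q.2 = p.2 then (1 / 2 : ℝ≥0) * w (lbl X p.1) none
       else if q.1 = p.1 ∧ q.2 = p.2 + 1 then (1 / 2 : ℝ≥0) * w none (lbl Y p.2)
       else (1 / 2 : ℝ≥0) * w (lbl X p.1) (lbl Y p.2)) + pathCost w X Y (q :: rest) :=
  rfl

lemma lbl_ne_none {α : Type*} {X : List (Paren α)} {i : ℕ} (hi : i < X.length) :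
    lbl X i ≠ none := by
  simp [lbl, List.getElem?_eq_getElem hi]

lemma sub_le_nonDiagCount {l : List (ℕ × ℕ)} {p : ℕ × ℕ} (hc : l.IsChain AlignStep)
    (hp : l.head? = some p) {q : ℕ × ℕ} (hq : q ∈ l) :
    q.1 + p.2 ≤ q.2 + p.1 + nonDiagCount l ∧ q.2 + p.1 ≤ q.1 + p.2 + nonDiagCount l := by
  induction l generalizing p with
  | nil => simp at hq
  | cons a t ih =>
    obtain rfl : a = p := by simpa using hp
    rcases List.mem_cons.mp hq with rfl | hq
    · omega
    cases t with
    | nil => simp at hq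
    | cons b t =>
      rw [List.isChain_cons_cons] at hc
      have hb := ih hc.2 rfl hq
      rw [nonDiagCount_cons_cons]
      rcases hc.1 with rfl | rfl | rfl <;> simp at hb ⊢ <;> omega

lemma nonDiagCount_le_two_mul_pathCost {α : Type*} {w : Option α → Option α → ℝ≥0}
    (hw : Normalized w) (F G : List (Paren α)) {l : List (ℕ × ℕ)} (hc : l.IsChain AlignStep)
    (hl : ∀ q ∈ l, q ≤ (F.length, G.length)) :
    (nonDiagCount l : ℝ≥0) ≤ 2 * pathCost w F G l := by
  induction l with
  | nil => simp [nonDiagCount]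
  | cons a t ih =>
    cases t with
    | nil => simp [nonDiagCount]
    | cons b t =>
      rw [List.isChain_cons_cons] at hc
      have hrest := ih hc.2 fun q hq => hl q (List.mem_cons_of_mem a hq)
      have hb : b ≤ (F.length, G.length) := hl b (by simp)
      have half_cancel (x : ℝ≥0) : 2 * ((1 / 2 : ℝ≥0) * x) = x := by ring
      rw [nonDiagCount_cons_cons, pathCost_cons_cons, mul_add]
      push_cast
      rcases hc.1 with rfl | rfl | rfl
      · have ha : a.1 < F.length := by simp [Prod.le_def] at hb; omega
        simp only [show ¬(a.2 = a.2 + 1) by omega, and_self, and_false, if_true, if_false,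
          half_cancel, Prod.mk.injEq]
        exact add_le_add (hw.2 _ _ (lbl_ne_none ha)) hrest
      · have ha : a.2 < G.length := by simp [Prod.le_def] at hb; omega
        simp only [show ¬(a.1 = a.1 + 1) by omega, false_and, if_false, true_and, if_true,
          half_cancel, Prod.mk.injEq]
        exact add_le_add (hw.2 _ _ (lbl_ne_none ha).symm) hrest
      · simp only [if_true, zero_add]
        exact hrest.trans (le_add_of_nonneg_left zero_le)

lemma widthLE_of_pathCost_lt {α : Type*} {w : Option α → Option α → ℝ≥0} (hw : Normalized w)
    {k : ℕ} {F G : List (Paren α)} {p : List (ℕ × ℕ)}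
    (hp : IsAlignment 0 F.length 0 G.length p) (hcost : pathCost w F G p < k + 1 / 2) :
    WidthLE (2 * k) p := by
  obtain ⟨hhead, hlast, hc⟩ := hp
  have hnd : (nonDiagCount p : ℝ≥0) < 2 * k + 1 :=
    calc (nonDiagCount p : ℝ≥0) ≤ 2 * pathCost w F G p :=
          nonDiagCount_le_two_mul_pathCost hw F G hc fun _ hq =>
            le_of_mem_of_getLast?_eq hc hlast hq
      _ < 2 * (k + 1 / 2) := by gcongr
      _ = 2 * k + 1 := by ring
  have hnd' : nonDiagCount p ≤ 2 * k := by
    have : nonDiagCount p < 2 * k + 1 := by exact_mod_cast hnd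
    omega
  intro q hq
  have := sub_le_nonDiagCount hc hhead hq
  simp only [add_zero] at this
  omega

theorem ted_eq_bted_of_le_general {α : Type*} (w : Option α → Option α → ℝ≥0)
    (hw : Normalized w) (k : ℕ)
    (F G : List (Paren α))
    (h : tedFrag w F G 0 F.length 0 G.length ≤ (k : ℝ≥0∞)) :
    tedFrag w F G 0 F.length 0 G.length = btedFrag k w F G 0 F.length 0 G.length := by
  refine le_antisymm (iInf_mono' fun p => ⟨⟨p.1, p.2.1, p.2.2.1⟩, le_rfl⟩) ?_
  refine le_of_forall_gt fun c hc => ?_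
  have hlt : tedFrag w F G 0 F.length 0 G.length < min c ((k + 1 / 2 : ℝ≥0) : ℝ≥0∞) := by
    refine lt_min hc (h.trans_lt ?_)
    exact_mod_cast (lt_add_of_pos_right (k : ℝ≥0) (by norm_num))
  obtain ⟨⟨p, hal, hcons⟩, hp⟩ := iInf_lt_iff.mp hlt
  have hbounded : WidthLE (2 * k) p :=
    widthLE_of_pathCost_lt hw hal (by exact_mod_cast (lt_min_iff.mp hp).2)
  exact (iInf_le _ ⟨p, hal, hcons, hbounded⟩).trans_lt (lt_min_iff.mp hp).1

/-- Observation 3.4: for a normalized weight function `w` and a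
threshold `k ∈ ℤ₊`, if `ted^w(F, G) ≤ k` then `ted^w(F, G) = bted_k^w(F, G)`. -/
theorem ted_eq_bted_of_le {α : Type*} (w : Option α → Option α → ℝ≥0)
    (hw : Normalized w) (k : ℕ) (hk : 0 < k)
    (F G : List (Paren α)) (hF : IsForest F) (hG : IsForest G)
    (h : tedFrag w F G 0 F.length 0 G.length ≤ (k : ℝ≥0∞)) :
    tedFrag w F G 0 F.length 0 G.length = btedFrag k w F G 0 F.length 0 G.length :=
  ted_eq_bted_of_le_general w hw k F G h
end

section
/- Let D be a piece decomposition of a forest F. Pieces f, f' ∈ D are adjacent if and only if the corresponding nodes v, v' of the hierarchy H_D satisfy one of: (1) v' is the sibling immediately to the right of v and both are leaves; (2) v' is the leftmost or rightmost child of v and v' is a leaf; (3) v' is the only child of v and v' is not a leaf. In all these cases D' := (D ∖ {f, f'}) ∪ {f ∪ f'} is a piece decomposition of F. Moreover, if M is a piece matching between D and a forest G and both f and f' are clean with respect to M, then there exist adjacent pieces g, g' of G with (f,g), (f',g') ∈ M; the set M' := (M ∖ {(f,g),(f',g')}) ∪ {(f∪f', g∪g')} is a piece matching between D' and G; the piece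 f∪f' is clean with respect to M'; and every piece in D ∖ {f,f'} that is clean with respect to M remains clean with respect to M'. -/
open scoped NNReal ENNReal

attribute [local instance] Classical.propDecidable

/-- A tree: a balanced string of the form `(_a · F · )_a`. -/
def IsTree {α : Type*} (T : List (Paren α)) : Prop :=
  ∃ (a : α) (F : List (Paren α)), IsForest F ∧ T = (true, a) :: F ++ [(false, a)]

/-- A context `⟨L; R⟩`: a pair of non-empty strings such that `L · R` is a tree. -/
def IsContext {α : Type*} (L R : List (Paren α)) : Prop :=
  L ≠ [] ∧ R ≠ [] ∧ IsTree (L ++ R)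

/-- A piece of a forest: either a subforest `F[l..r)` or a context
`⟨F[a..b); F[c..d)⟩`, recorded by its boundary positions. -/
inductive Piece : Type
  | forest (l r : ℕ)
  | context (a b c d : ℕ)
  deriving DecidableEq

/-- The set of positions (characters) covered by a piece. -/
def pieceChars : Piece → Finset ℕ
  | .forest l r => Finset.Ico l r
  | .context a b c d => Finset.Ico a b ∪ Finset.Ico c d

/-- Validity of a piece of the forest `F`: a subforest is a balanced fragment
`F[l..r)`; a context `⟨F[a..b); F[c..d)⟩` requires `F[a..d)` to be a tree and
`F[b..c)` to be balanced, with both halves non-empty. -/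
def IsPiece {α : Type*} (F : List (Paren α)) : Piece → Prop
  | .forest l r => l ≤ r ∧ r ≤ F.length ∧ IsForest (frag F l r)
  | .context a b c d => a < b ∧ b ≤ c ∧ c < d ∧ d ≤ F.length ∧
      IsTree (frag F a d) ∧ IsForest (frag F b c)

/-- Piece decompositions of the balanced fragment `F[i..j)` (Definition 5.1). -/
inductive IsPieceDecomp {α : Type*} (F : List (Paren α)) : ℕ → ℕ → Finset Piece → Prop
  | empty (i : ℕ) : IsPieceDecomp F i i ∅
  | single {i j : ℕ} : i < j → j ≤ F.length → IsForest (frag F i j) →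
      IsPieceDecomp F i j {Piece.forest i j}
  | split {i m j : ℕ} {DL DR : Finset Piece} : i < m → m < j →
      IsPieceDecomp F i m DL → IsPieceDecomp F m j DR → IsPieceDecomp F i j (DL ∪ DR)
  | context {i b c j : ℕ} {D' : Finset Piece} :
      IsPiece F (Piece.context i b c j) → IsPieceDecomp F b c D' →
      IsPieceDecomp F i j (insert (Piece.context i b c j) D')

/-- The alignment matches the piece of `F` perfectly to the piece of `G`:
corresponding fragments are equal and every character of the piece is aligned
(matched) to the corresponding character of the other piece. -/
def MatchesPerfectly {α : Type*} (F G : List (Paren α)) (path : List (ℕ × ℕ)) :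
    Piece → Piece → Prop
  | .forest l r, .forest l' r' =>
      r - l = r' - l' ∧ frag F l r = frag G l' r' ∧
      ∀ t, l + t < r → AlignsAt path (l + t) (l' + t)
  | .context a b c d, .context a' b' c' d' =>
      b - a = b' - a' ∧ d - c = d' - c' ∧
      frag F a b = frag G a' b' ∧ frag F c d = frag G c' d' ∧
      (∀ t, a + t < b → AlignsAt path (a + t) (a' + t)) ∧
      (∀ t, c + t < d → AlignsAt path (c + t) (c' + t))
  | _, _ => False

/-- A piece matching between `F` and `G` for the threshold `k` (Definition 5.2):
the `F`-pieces of the pairs are pairwise disjoint, and there exists a forest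
alignment of `F` onto `G` of width at most `2k` that matches `f` to `g`
perfectly for every pair `(f, g)` of the matching. -/
def IsPieceMatching {α : Type*} (k : ℕ) (F G : List (Paren α))
    (M : Finset (Piece × Piece)) : Prop :=
  (∀ p ∈ M, IsPiece F p.1 ∧ IsPiece G p.2) ∧
  (∀ p ∈ M, ∀ q ∈ M, p ≠ q → Disjoint (pieceChars p.1) (pieceChars q.1)) ∧
  ∃ path : List (ℕ × ℕ), IsAlignment 0 F.length 0 G.length path ∧ Consistent F G path ∧
    WidthLE (2 * k) path ∧ ∀ p ∈ M, MatchesPerfectly F G path p.1 p.2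

/-- The position `p` is (immediately) adjacent to the piece `f`: it is not a
character of `f`, but it immediately precedes or follows a character of `f`. -/
def posAdjacent (f : Piece) (p : ℕ) : Prop :=
  p ∉ pieceChars f ∧ (p + 1 ∈ pieceChars f ∨ ∃ q ∈ pieceChars f, p = q + 1)

/-- A piece `f` of `F` is clean with respect to the matching `M`: it is matched
to some piece `g` of `G`, no unmatched character of `F` is adjacent to `f`, and
no unmatched character of `G` is adjacent to `g`. -/
def CleanPiece {α : Type*} (F G : List (Paren α)) (M : Finset (Piece × Piece))
    (f : Piece) : Prop :=
  ∃ g, (f, g) ∈ M ∧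
    (∀ p < F.length, posAdjacent f p → ∃ q ∈ M, p ∈ pieceChars q.1) ∧
    (∀ p < G.length, posAdjacent g p → ∃ q ∈ M, p ∈ pieceChars q.2)

/-- `AdjacentUnion f f' u`: the pieces `f` and `f'` are adjacent (Definition 5.3)
and `u` is their union `f ∪ f'`:
(1) two subforests sharing a boundary; (2) a context and a subforest sharing a
boundary of one of the context halves; (3) two nested contexts sharing both half
boundaries. -/
def AdjacentUnion : Piece → Piece → Piece → Prop
  | .forest l r, .forest l' r', u => r = l' ∧ u = .forest l r'
  | .context a b c d, .forest l' r', u =>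
      (b = l' ∧ c = r' ∧ u = .forest a d) ∨
      (b = l' ∧ c ≠ r' ∧ u = .context a r' c d) ∨
      (c = r' ∧ b ≠ l' ∧ u = .context a b l' d)
  | .context a b c d, .context a' b' c' d', u =>
      b = a' ∧ c = d' ∧ u = .context a b' c' d
  | .forest _ _, .context _ _ _ _, _ => False

/-- Two pieces are adjacent if their union is again a piece. -/
def Adjacent (f f' : Piece) : Prop := ∃ u, AdjacentUnion f f' u

/-!
Adjacency is read off the constructors of `AdjacentUnion`. Merging two adjacent pieces of a
decomposition is an induction on the decomposition: the two pieces either touch at the point of a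
`split`, or one of them is the context of a `context` step and the other lies in its hole,
touching it on the left, on the right, on both sides, or as a nested context.

For the matching: an alignment visits its aligned pairs in increasing order in both coordinates,
so if `F[x]` and `F[x + 1]` are aligned to `G[y]` and `G[y']`, and `G[y + 1]` is aligned at all,
then `y' = y + 1`; symmetrically with `F` and `G` exchanged. Cleanliness of `f` and `f'` makes
every character right after `f`, `f'` in `F`, and right after their partners `g`, `g'` in `G`,
aligned. Hence `g` and `g'` touch exactly where `f` and `f'` touch, so `g ∪ g'` is a piece of the
same shape, matched perfectly to `f ∪ f'` by the same alignment. The merged pair covers exactly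
the positions covered by the two pairs it replaces, so cleanliness is preserved.
-/

lemma adjacent_iff (f f' : Piece) :
    Adjacent f f' ↔
      ((∃ l r r', f = Piece.forest l r ∧ f' = Piece.forest r r') ∨
       (∃ a b c d, f = Piece.context a b c d ∧
          ((∃ r', f' = Piece.forest b r') ∨ (∃ l', f' = Piece.forest l' c))) ∨
       (∃ a b c d b' c', f = Piece.context a b c d ∧ f' = Piece.context b b' c' c)) := by
  constructor
  · rintro ⟨u, hu⟩
    rcases f with ⟨l, r⟩ | ⟨a, b, c, d⟩ <;>
      rcases f' with ⟨l', r'⟩ | ⟨a', b', c', d'⟩ <;> simp only [AdjacentUnion] at hu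
    · exact Or.inl ⟨l, r, r', rfl, hu.1 ▸ rfl⟩
    · rcases hu with ⟨rfl, rfl, -⟩ | ⟨rfl, -⟩ | ⟨rfl, -⟩ <;> simp
    · obtain ⟨rfl, rfl, -⟩ := hu
      simp
  · rintro (⟨l, r, r', rfl, rfl⟩ | ⟨a, b, c, d, rfl, ⟨r', rfl⟩ | ⟨l', rfl⟩⟩ |
      ⟨a, b, c, d, b', c', rfl, rfl⟩)
    · exact ⟨.forest l r', rfl, rfl⟩
    · by_cases hc : c = r'
      · exact ⟨.forest a d, Or.inl ⟨rfl, hc, rfl⟩⟩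
      · exact ⟨.context a r' c d, Or.inr (Or.inl ⟨rfl, hc, rfl⟩)⟩
    · by_cases hb : b = l'
      · exact ⟨.forest a d, Or.inl ⟨hb, rfl, rfl⟩⟩
      · exact ⟨.context a b l' d, Or.inr (Or.inr ⟨rfl, hb, rfl⟩)⟩
    · exact ⟨.context a b' c' d, rfl, rfl, rfl⟩

/- A string is balanced iff the bracket-matching stack machine, started on the empty stack, ends on
it; this yields the cancellation laws `IsForest.right_of_append` and `IsForest.left_of_append`. -/

section StackMachine

variable {α : Type*}

noncomputable def stackStep : Option (List α) → Paren α → Option (List α)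
  | some s, (true, a) => some (a :: s)
  | some (b :: s), (false, a) => if a = b then some s else none
  | _, _ => none

noncomputable def stackRun (s : Option (List α)) (L : List (Paren α)) : Option (List α) :=
  L.foldl stackStep s

/-- The string of opening parentheses that leaves the stack `s` (top first). -/
def openers (s : List α) : List (Paren α) := s.reverse.map ((true, ·))

lemma stackRun_append (s : Option (List α)) (X Y : List (Paren α)) :
    stackRun s (X ++ Y) = stackRun (stackRun s X) Y :=
  List.foldl_append

@[simp] lemma stackRun_none (L : List (Paren α)) : stackRun none L = none := by
  induction L with
  | nil => rfl
  | cons c L ih => cases c; exact ih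

lemma IsForest.stackRun_eq {L : List (Paren α)} (h : IsForest L) (s : List α) :
    stackRun (some s) L = some s := by
  induction h generalizing s with
  | nil => rfl
  | append _ _ ihF ihG => rw [stackRun_append, ihF, ihG]
  | wrap a _ ih =>
    rw [stackRun_append]
    change stackRun (stackRun (some (a :: s)) _) _ = _
    rw [ih]
    simp [stackRun, stackStep]

lemma IsForest.insert_pair (a : α) {X Y : List (Paren α)} (h : IsForest (X ++ Y)) :
    IsForest (X ++ (true, a) :: (false, a) :: Y) := by
  have hpair : IsForest [(true, a), (false, a)] := .wrap a .nil
  generalize hL : X ++ Y = L at h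
  induction h generalizing X Y with
  | nil =>
    obtain ⟨rfl, rfl⟩ := List.append_eq_nil_iff.mp hL
    exact hpair
  | @append F G hF hG ihF ihG =>
    rcases List.append_eq_append_iff.mp hL with ⟨m, rfl, rfl⟩ | ⟨m, rfl, rfl⟩
    · simpa using (ihF rfl).append hG
    · simpa using hF.append (ihG rfl)
  | @wrap F b hF ih =>
    rcases X with _ | ⟨x, X⟩
    · subst hL
      simpa using hpair.append (.wrap b hF)
    rcases Y.eq_nil_or_concat with rfl | ⟨Y, y, rfl⟩
    · simpa [← hL] using (IsForest.wrap b hF).append hpair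
    simp only [List.cons_append, List.cons.injEq, List.concat_eq_append] at hL
    obtain ⟨rfl, hL⟩ := hL
    obtain ⟨rfl, hy⟩ := List.append_inj' ((List.append_assoc ..).trans hL) rfl
    obtain rfl : y = (false, b) := by simpa using hy
    simpa using IsForest.wrap b (ih rfl)

lemma isForest_openers_append_of_stackRun :
    ∀ (L : List (Paren α)) (s : List α), stackRun (some s) L = some [] →
      IsForest (openers s ++ L)
  | [], s, h => by
    obtain rfl : s = [] := by simpa [stackRun] using h
    exact .nil
  | (true, a) :: L, s, h => by
    simpa [openers] using isForest_openers_append_of_stackRun L (a :: s) h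
  | (false, a) :: L, [], h => by
    change stackRun none L = some [] at h
    simp at h
  | (false, a) :: L, b :: s, h => by
    by_cases hab : a = b
    · subst hab
      have h' : stackRun (some s) L = some [] := by simpa [stackRun, stackStep] using h
      simpa [openers] using
        (isForest_openers_append_of_stackRun L s h').insert_pair a
    · change stackRun (if a = b then some s else none) L = some [] at h
      simp [hab] at h

lemma isForest_iff_stackRun {L : List (Paren α)} :
    IsForest L ↔ stackRun (some []) L = some [] :=
  ⟨fun h => h.stackRun_eq [],
    fun h => by simpa [openers] using isForest_openers_append_of_stackRun L [] h⟩

lemma IsForest.right_of_append {X Y : List (Paren α)} (hX : IsForest X)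
    (h : IsForest (X ++ Y)) : IsForest Y := by
  rw [isForest_iff_stackRun, stackRun_append, hX.stackRun_eq] at h
  exact isForest_iff_stackRun.mpr h

lemma IsForest.left_of_append {X Y : List (Paren α)} (hY : IsForest Y)
    (h : IsForest (X ++ Y)) : IsForest X := by
  rw [isForest_iff_stackRun, stackRun_append] at h
  rcases hX : stackRun (some []) X with _ | s
  · simp [hX] at h
  · rw [hX, hY.stackRun_eq] at h
    rwa [isForest_iff_stackRun, hX]

lemma IsTree.isForest {T : List (Paren α)} (h : IsTree T) : IsForest T := by
  obtain ⟨a, F, hF, rfl⟩ := h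
  exact .wrap a hF

end StackMachine

section Fragments

variable {β : Type*}

lemma frag_append (l : List β) {i m j : ℕ} (him : i ≤ m) (hmj : m ≤ j) :
    frag l i m ++ frag l m j = frag l i j := by
  simp only [frag, List.drop_take]
  rw [show j - i = (m - i) + (j - m) by omega, List.take_add, List.drop_drop,
    show i + (m - i) = m by omega]

@[simp] lemma frag_self (l : List β) (i : ℕ) : frag l i i = [] := by
  simp [frag]

end Fragments

@[simp] lemma mem_pieceChars_forest {l r x : ℕ} :
    x ∈ pieceChars (.forest l r) ↔ l ≤ x ∧ x < r := by
  simp [pieceChars]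

@[simp] lemma mem_pieceChars_context {a b c d x : ℕ} :
    x ∈ pieceChars (.context a b c d) ↔ a ≤ x ∧ x < b ∨ c ≤ x ∧ x < d := by
  simp [pieceChars]

namespace IsPieceDecomp

variable {α : Type*} {F : List (Paren α)} {i j : ℕ} {D : Finset Piece}

lemma le (h : IsPieceDecomp F i j D) : i ≤ j := by
  cases h with
  | empty => exact le_rfl
  | single hij => exact hij.le
  | split him hmj => omega
  | context hp => obtain ⟨_, _, _, _⟩ := hp; omega

lemma isForest (h : IsPieceDecomp F i j D) : IsForest (frag F i j) := by
  induction h with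
  | empty => simpa using IsForest.nil
  | single _ _ hfor => exact hfor
  | split him hmj _ _ ihL ihR => exact frag_append F him.le hmj.le ▸ ihL.append ihR
  | context hp => exact hp.2.2.2.2.1.isForest

lemma eq_empty (h : IsPieceDecomp F i i D) : D = ∅ := by
  cases h with
  | empty => rfl
  | single h => omega
  | split h h' => omega
  | context hp => obtain ⟨_, _, _, _⟩ := hp; omega

lemma isPiece (h : IsPieceDecomp F i j D) {p : Piece} (hp : p ∈ D) : IsPiece F p := by
  induction h with
  | empty => simp at hp
  | single hij hjF hfor =>
    obtain rfl := Finset.mem_singleton.mp hp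
    exact ⟨hij.le, hjF, hfor⟩
  | split _ _ _ _ ihL ihR => exact (Finset.mem_union.mp hp).elim ihL ihR
  | context hctx _ ih => exact (Finset.mem_insert.mp hp).elim (· ▸ hctx) ih

lemma mem_Ico (h : IsPieceDecomp F i j D) {p : Piece} (hp : p ∈ D) {x : ℕ}
    (hx : x ∈ pieceChars p) : i ≤ x ∧ x < j := by
  induction h with
  | empty => simp at hp
  | single =>
    obtain rfl := Finset.mem_singleton.mp hp
    simpa using hx
  | split _ _ _ _ ihL ihR =>
    rcases Finset.mem_union.mp hp with hp | hp
    · have := ihL hp; omega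
    · have := ihR hp; omega
  | context hctx _ ih =>
    obtain ⟨_, _, _, _⟩ := hctx
    rcases Finset.mem_insert.mp hp with rfl | hp
    · rw [mem_pieceChars_context] at hx; omega
    · have := ih hp; omega

lemma pieceChars_nonempty (h : IsPieceDecomp F i j D) {p : Piece} (hp : p ∈ D) :
    (pieceChars p).Nonempty := by
  induction h with
  | empty => simp at hp
  | single hij =>
    obtain rfl := Finset.mem_singleton.mp hp
    exact ⟨_, mem_pieceChars_forest.mpr ⟨le_rfl, hij⟩⟩
  | split _ _ _ _ ihL ihR => exact (Finset.mem_union.mp hp).elim ihL ihR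
  | context hctx _ ih =>
    obtain ⟨hab, _⟩ := hctx
    rcases Finset.mem_insert.mp hp with rfl | hp
    · exact ⟨_, mem_pieceChars_context.mpr (Or.inl ⟨le_rfl, hab⟩)⟩
    · exact ih hp

lemma disjoint (h : IsPieceDecomp F i j D) {p q : Piece} (hp : p ∈ D) (hq : q ∈ D)
    (hpq : p ≠ q) : Disjoint (pieceChars p) (pieceChars q) := by
  induction h with
  | empty => simp at hp
  | single =>
    exact absurd ((Finset.mem_singleton.mp hp).trans (Finset.mem_singleton.mp hq).symm) hpq
  | split _ _ hL hR ihL ihR =>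
    refine Finset.disjoint_left.mpr fun x hxp hxq => ?_
    rcases Finset.mem_union.mp hp with hp | hp <;> rcases Finset.mem_union.mp hq with hq | hq
    · exact Finset.disjoint_left.mp (ihL hp hq) hxp hxq
    · have := hL.mem_Ico hp hxp; have := hR.mem_Ico hq hxq; omega
    · have := hR.mem_Ico hp hxp; have := hL.mem_Ico hq hxq; omega
    · exact Finset.disjoint_left.mp (ihR hp hq) hxp hxq
  | context hctx hD' ih =>
    obtain ⟨_, _, _, _⟩ := hctx
    refine Finset.disjoint_left.mpr fun x hxp hxq => ?_
    rcases Finset.mem_insert.mp hp with rfl | hp <;> rcases Finset.mem_insert.mp hq with rfl | hq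
    · exact hpq rfl
    · have := hD'.mem_Ico hq hxq; rw [mem_pieceChars_context] at hxp; omega
    · have := hD'.mem_Ico hp hxp; rw [mem_pieceChars_context] at hxq; omega
    · exact Finset.disjoint_left.mp (ih hp hq) hxp hxq

lemma union {m : ℕ} {DL DR : Finset Piece} (hL : IsPieceDecomp F i m DL)
    (hR : IsPieceDecomp F m j DR) : IsPieceDecomp F i j (DL ∪ DR) := by
  rcases hL.le.eq_or_lt with rfl | him
  · simpa [hL.eq_empty] using hR
  rcases hR.le.eq_or_lt with rfl | hmj
  · simpa [hR.eq_empty] using hL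
  exact .split him hmj hL hR

lemma disjoint_of_consecutive {m : ℕ} {DL DR : Finset Piece} (hL : IsPieceDecomp F i m DL)
    (hR : IsPieceDecomp F m j DR) : Disjoint DL DR :=
  Finset.disjoint_left.mpr fun p hpL hpR => by
    obtain ⟨x, hx⟩ := hL.pieceChars_nonempty hpL
    have := hL.mem_Ico hpL hx
    have := hR.mem_Ico hpR hx
    omega

lemma forest_bounds (h : IsPieceDecomp F i j D) {l r : ℕ} (hp : .forest l r ∈ D) :
    i ≤ l ∧ l < r ∧ r ≤ j := by
  have hlr : l < r := Finset.nonempty_Ico.mp (h.pieceChars_nonempty hp)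
  have h1 := h.mem_Ico hp (x := l) (mem_pieceChars_forest.mpr (by omega))
  have h2 := h.mem_Ico hp (x := r - 1) (mem_pieceChars_forest.mpr (by omega))
  omega

lemma context_bounds (h : IsPieceDecomp F i j D) {a b c d : ℕ} (hp : .context a b c d ∈ D) :
    i ≤ a ∧ a < b ∧ b ≤ c ∧ c < d ∧ d ≤ j := by
  obtain ⟨hab, hbc, hcd, -⟩ := h.isPiece hp
  have h1 := h.mem_Ico hp (x := a) (mem_pieceChars_context.mpr (by omega))
  have h2 := h.mem_Ico hp (x := d - 1) (mem_pieceChars_context.mpr (by omega))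
  omega

lemma erase_forest_last (h : IsPieceDecomp F i j D) {l : ℕ} (hp : .forest l j ∈ D) :
    IsPieceDecomp F i l (D.erase (.forest l j)) := by
  induction h with
  | empty => simp at hp
  | single =>
    obtain ⟨rfl, -⟩ := Piece.forest.inj (Finset.mem_singleton.mp hp)
    simpa using empty _
  | split _ hmj hL hR _ ihR =>
    have hpR : Piece.forest l _ ∈ _ := (Finset.mem_union.mp hp).resolve_left fun hpL => by
      have := hL.forest_bounds hpL; omega
    rw [Finset.erase_union_distrib,
      Finset.erase_eq_of_notMem (Finset.disjoint_right.mp (hL.disjoint_of_consecutive hR) hpR)]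
    exact hL.union (ihR hpR)
  | context hctx hD' =>
    obtain ⟨-, -, hcj, -⟩ := hctx
    have := hD'.forest_bounds (by simpa using hp)
    omega

lemma erase_forest_first (h : IsPieceDecomp F i j D) {r : ℕ} (hp : .forest i r ∈ D) :
    IsPieceDecomp F r j (D.erase (.forest i r)) := by
  induction h with
  | empty => simp at hp
  | single =>
    obtain ⟨-, rfl⟩ := Piece.forest.inj (Finset.mem_singleton.mp hp)
    simpa using empty _
  | split him _ hL hR ihL _ =>
    have hpL : Piece.forest _ r ∈ _ := (Finset.mem_union.mp hp).resolve_right fun hpR => by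
      have := hR.forest_bounds hpR; omega
    rw [Finset.erase_union_distrib,
      Finset.erase_eq_of_notMem (Finset.disjoint_left.mp (hL.disjoint_of_consecutive hR) hpL)]
    exact (ihL hpL).union hR
  | context hctx hD' =>
    obtain ⟨hib, -⟩ := hctx
    have := hD'.forest_bounds (by simpa using hp)
    omega

lemma erase_context_outer (h : IsPieceDecomp F i j D) {b c : ℕ} (hp : .context i b c j ∈ D) :
    IsPieceDecomp F b c (D.erase (.context i b c j)) := by
  induction h with
  | empty => simp at hp
  | single => simp at hp
  | split him hmj hL hR =>
    rcases Finset.mem_union.mp hp with hp | hp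
    · have := hL.context_bounds hp; omega
    · have := hR.context_bounds hp; omega
  | @context i' b' c' j' D' hctx hD' =>
    obtain ⟨hib, -⟩ := hctx
    have hnot : Piece.context i' b c j' ∉ D' := fun hp' => by
      have := hD'.context_bounds hp'; omega
    obtain ⟨-, rfl, rfl, -⟩ := Piece.context.inj ((Finset.mem_insert.mp hp).resolve_right hnot)
    rwa [Finset.erase_insert hnot]

lemma merge_into_context {b c : ℕ} {D' : Finset Piece} {f' u : Piece}
    (hctx : IsPiece F (.context i b c j)) (hD' : IsPieceDecomp F b c D') (hf' : f' ∈ D')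
    (hadj : AdjacentUnion (.context i b c j) f' u) :
    IsPieceDecomp F i j (insert u (D'.erase f')) := by
  obtain ⟨hib, hbc, hcj, hjF, htree, -⟩ := hctx
  rcases f' with ⟨l', r'⟩ | ⟨a', b', c', d'⟩
  · have := hD'.forest_bounds hf'
    rcases hadj with ⟨rfl, rfl, rfl⟩ | ⟨rfl, -, rfl⟩ | ⟨rfl, -, rfl⟩
    · simpa [(hD'.erase_forest_last hf').eq_empty] using single (by omega) hjF htree.isForest
    · have hrest := hD'.erase_forest_first hf'
      exact context ⟨by omega, hrest.le, hcj, hjF, htree, hrest.isForest⟩ hrest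
    · have hrest := hD'.erase_forest_last hf'
      exact context ⟨hib, hrest.le, by omega, hjF, htree, hrest.isForest⟩ hrest
  · obtain ⟨rfl, rfl, rfl⟩ := hadj
    have := hD'.context_bounds hf'
    have hrest := hD'.erase_context_outer hf'
    exact context ⟨by omega, hrest.le, by omega, hjF, htree, hrest.isForest⟩ hrest

lemma merge_across {m : ℕ} {DL DR : Finset Piece} {f f' u : Piece}
    (hL : IsPieceDecomp F i m DL) (hR : IsPieceDecomp F m j DR) (hf : f ∈ DL) (hf' : f' ∈ DR)
    (hadj : AdjacentUnion f f' u) :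
    IsPieceDecomp F i j (insert u ((DL ∪ DR) \ {f, f'})) := by
  have hdisj := hL.disjoint_of_consecutive hR
  rcases f with ⟨l, r⟩ | ⟨a, b, c, d⟩ <;>
    rcases f' with ⟨l', r'⟩ | ⟨a', b', c', d'⟩ <;> simp only [AdjacentUnion] at hadj
  · obtain ⟨rfl, rfl⟩ := hadj
    have := hL.forest_bounds hf
    have := hR.forest_bounds hf'
    obtain rfl : r = m := by omega
    have hfor : IsForest (frag F l r') := by
      rw [← frag_append F (m := r) (by omega) (by omega)]
      exact (hL.isPiece hf).2.2.append (hR.isPiece hf').2.2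
    have hu : IsPieceDecomp F l r' {.forest l r'} := single (by omega) (hR.isPiece hf').2.1 hfor
    convert ((hL.erase_forest_last hf).union hu).union (hR.erase_forest_first hf') using 1
    have := Finset.disjoint_left.mp hdisj hf
    have := Finset.disjoint_right.mp hdisj hf'
    grind
  · have := hL.context_bounds hf
    have := hR.forest_bounds hf'
    rcases hadj with ⟨rfl, -⟩ | ⟨rfl, -⟩ | ⟨rfl, -⟩ <;> omega
  · have := hL.context_bounds hf
    have := hR.context_bounds hf'
    omega

lemma merge (h : IsPieceDecomp F i j D) {f f' u : Piece} (hf : f ∈ D)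
    (hf' : f' ∈ D) (hne : f ≠ f') (hadj : AdjacentUnion f f' u) :
    IsPieceDecomp F i j (insert u (D \ {f, f'})) := by
  induction h with
  | empty => simp at hf
  | single => cases hne ((Finset.mem_singleton.mp hf).trans (Finset.mem_singleton.mp hf').symm)
  | split him hmj hL hR ihL ihR =>
    have hdisj := hL.disjoint_of_consecutive hR
    rcases Finset.mem_union.mp hf with hfL | hfR <;> rcases Finset.mem_union.mp hf' with hf'L | hf'R
    · convert split him hmj (ihL hfL hf'L) hR using 1
      have := Finset.disjoint_left.mp hdisj hfL
      have := Finset.disjoint_left.mp hdisj hf'L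
      grind
    · exact merge_across hL hR hfL hf'R hadj
    · exfalso
      rcases f with ⟨l, r⟩ | ⟨a, b, c, d⟩ <;>
        rcases f' with ⟨l', r'⟩ | ⟨a', b', c', d'⟩ <;> simp only [AdjacentUnion] at hadj
      · have := hR.forest_bounds hfR
        have := hL.forest_bounds hf'L
        omega
      · have := hR.context_bounds hfR
        have := hL.forest_bounds hf'L
        rcases hadj with ⟨rfl, -⟩ | ⟨rfl, -⟩ | ⟨rfl, -⟩ <;> omega
      · have := hR.context_bounds hfR
        have := hL.context_bounds hf'L
        omega
    · convert split him hmj hL (ihR hfR hf'R) using 1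
      have := Finset.disjoint_right.mp hdisj hfR
      have := Finset.disjoint_right.mp hdisj hf'R
      grind
  | @context i b c j D' hctx hD' ih =>
    have hnot : Piece.context i b c j ∉ D' := fun hp => by
      have := hD'.context_bounds hp; obtain ⟨_, _⟩ := hctx; omega
    rcases Finset.mem_insert.mp hf with rfl | hfD <;>
      rcases Finset.mem_insert.mp hf' with rfl | hf'D
    · exact absurd rfl hne
    · convert merge_into_context hctx hD' hf'D hadj using 1
      grind
    · exfalso
      rcases f with ⟨l, r⟩ | ⟨a, b, c, d⟩ <;> simp only [AdjacentUnion] at hadj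
      have := hD'.context_bounds hfD
      obtain ⟨_, _⟩ := hctx
      omega
    · convert context hctx (ih hfD hf'D) using 1
      grind

end IsPieceDecomp

section Alignment

variable {path : List (ℕ × ℕ)} {x y x' y' : ℕ}

lemma getElem?_le_getElem?_of_isChain (hch : path.IsChain AlignStep) {t s : ℕ} {p q : ℕ × ℕ}
    (hts : t ≤ s) (hp : path[t]? = some p) (hq : path[s]? = some q) : p ≤ q := by
  have hsorted : path.Pairwise (· ≤ ·) :=
    (hch.imp fun p q hpq => by rcases hpq with rfl | rfl | rfl <;> simp [Prod.le_def]).pairwise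
  obtain ⟨ht, rfl⟩ := List.getElem?_eq_some_iff.mp hp
  obtain ⟨hs, rfl⟩ := List.getElem?_eq_some_iff.mp hq
  rcases hts.eq_or_lt with rfl | hlt
  · exact le_rfl
  · exact List.pairwise_iff_getElem.mp hsorted t s ht hs hlt

lemma AlignsAt.lt_iff_lt (hch : path.IsChain AlignStep) (h : AlignsAt path x y)
    (h' : AlignsAt path x' y') : x < x' ↔ y < y' := by
  obtain ⟨t, ht, ht1⟩ := h
  obtain ⟨s, hs, hs1⟩ := h'
  rcases lt_trichotomy t s with hts | rfl | hst
  · have := getElem?_le_getElem?_of_isChain hch hts ht1 hs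
    simp only [Prod.mk_le_mk] at this
    omega
  · obtain ⟨rfl, rfl⟩ := Prod.mk.inj (Option.some.inj (ht.symm.trans hs))
    simp
  · have := getElem?_le_getElem?_of_isChain hch hst hs1 ht
    simp only [Prod.mk_le_mk] at this
    omega

lemma AlignsAt.lt_length {m n : ℕ} (halign : IsAlignment 0 m 0 n path) (h : AlignsAt path x y) :
    x < m ∧ y < n := by
  obtain ⟨-, hlast, hch⟩ := halign
  obtain ⟨t, -, ht1⟩ := h
  rw [List.getLast?_eq_getElem?] at hlast
  have hlen : t + 1 < path.length := (List.getElem?_eq_some_iff.mp ht1).1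
  have := getElem?_le_getElem?_of_isChain hch (by omega : t + 1 ≤ path.length - 1) ht1 hlast
  simp only [Prod.mk_le_mk] at this
  omega

lemma AlignsAt.snd_eq_succ {m n : ℕ} (halign : IsAlignment 0 m 0 n path)
    (h : AlignsAt path x y) (h' : AlignsAt path x' y') (hx : x' = x + 1)
    (hcov : y + 1 < n → ∃ x'', AlignsAt path x'' (y + 1)) : y' = y + 1 := by
  have hy := (h.lt_iff_lt halign.2.2 h').mp (by omega)
  obtain ⟨x'', h''⟩ := hcov (by have := (h'.lt_length halign).2; omega)
  have := h.lt_iff_lt halign.2.2 h''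
  have := h''.lt_iff_lt halign.2.2 h'
  omega

lemma AlignsAt.fst_eq_succ {m n : ℕ} (halign : IsAlignment 0 m 0 n path)
    (h : AlignsAt path x y) (h' : AlignsAt path x' y') (hy : y' = y + 1)
    (hcov : x + 1 < m → ∃ y'', AlignsAt path (x + 1) y'') : x' = x + 1 := by
  have hx := (h.lt_iff_lt halign.2.2 h').mpr (by omega)
  obtain ⟨y'', h''⟩ := hcov (by have := (h'.lt_length halign).1; omega)
  have := h.lt_iff_lt halign.2.2 h''
  have := h''.lt_iff_lt halign.2.2 h'
  omega

end Alignment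

section Matching

variable {α : Type*} {F G : List (Paren α)} {path : List (ℕ × ℕ)}

/-- `MatchesPerfectly` for a subforest, or for one half of a context. -/
def MatchesSegment (F G : List (Paren α)) (path : List (ℕ × ℕ)) (l r l' r' : ℕ) : Prop :=
  r - l = r' - l' ∧ frag F l r = frag G l' r' ∧
    ∀ t, l + t < r → AlignsAt path (l + t) (l' + t)

lemma matchesPerfectly_context {a b c d a' b' c' d' : ℕ} :
    MatchesPerfectly F G path (.context a b c d) (.context a' b' c' d') ↔
      MatchesSegment F G path a b a' b' ∧ MatchesSegment F G path c d c' d' := by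
  simp only [MatchesPerfectly, MatchesSegment]
  tauto

lemma MatchesPerfectly.exists_forest {l r : ℕ} {q : Piece}
    (h : MatchesPerfectly F G path (.forest l r) q) :
    ∃ l' r', q = .forest l' r' ∧ MatchesSegment F G path l r l' r' := by
  rcases q with ⟨l', r'⟩ | _
  exacts [⟨l', r', rfl, h⟩, h.elim]

lemma MatchesPerfectly.exists_context {a b c d : ℕ} {q : Piece}
    (h : MatchesPerfectly F G path (.context a b c d) q) :
    ∃ a' b' c' d', q = .context a' b' c' d' ∧
      MatchesSegment F G path a b a' b' ∧ MatchesSegment F G path c d c' d' := by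
  rcases q with _ | ⟨a', b', c', d'⟩
  exacts [h.elim, ⟨a', b', c', d', rfl, matchesPerfectly_context.mp h⟩]

namespace MatchesSegment

variable {l m r l' m' r' : ℕ}

lemma append (h₁ : MatchesSegment F G path l m l' m') (h₂ : MatchesSegment F G path m r m' r')
    (hlm : l < m) (hmr : m < r) : MatchesSegment F G path l r l' r' := by
  obtain ⟨hlen₁, hfrag₁, hal₁⟩ := h₁
  obtain ⟨hlen₂, hfrag₂, hal₂⟩ := h₂
  refine ⟨by omega, ?_, fun t ht => ?_⟩
  · rw [← frag_append F hlm.le hmr.le,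
      ← frag_append G (by omega : l' ≤ m') (by omega : m' ≤ r'), hfrag₁, hfrag₂]
  · by_cases htm : l + t < m
    · exact hal₁ t htm
    · have := hal₂ (l + t - m) (by omega)
      rwa [show m + (l + t - m) = l + t by omega, show m' + (l + t - m) = l' + t by omega] at this

lemma alignsAt_first (h : MatchesSegment F G path l r l' r') (hlr : l < r) :
    AlignsAt path l l' := by
  simpa using h.2.2 0 (by omega)

lemma alignsAt_last (h : MatchesSegment F G path l r l' r') (hlr : l < r) :
    AlignsAt path (r - 1) (r' - 1) := by
  have hlen := h.1
  have := h.2.2 (r - 1 - l) (by omega)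
  rwa [show l + (r - 1 - l) = r - 1 by omega, show l' + (r - 1 - l) = r' - 1 by omega] at this

lemma exists_alignsAt_fst (h : MatchesSegment F G path l r l' r') {x : ℕ}
    (hx : l ≤ x ∧ x < r) : ∃ y, AlignsAt path x y :=
  ⟨l' + (x - l), by simpa [show l + (x - l) = x by omega] using h.2.2 (x - l) (by omega)⟩

lemma exists_alignsAt_snd (h : MatchesSegment F G path l r l' r') {y : ℕ}
    (hy : l' ≤ y ∧ y < r') : ∃ x, (l ≤ x ∧ x < r) ∧ AlignsAt path x y := by
  have := h.2.2 (y - l') (by have := h.1; omega)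
  rw [show l' + (y - l') = y by omega] at this
  exact ⟨_, by have := h.1; omega, this⟩

end MatchesSegment

namespace MatchesPerfectly

variable {p q : Piece}

lemma exists_alignsAt_fst (h : MatchesPerfectly F G path p q) {x : ℕ} (hx : x ∈ pieceChars p) :
    ∃ y, AlignsAt path x y := by
  rcases p with ⟨l, r⟩ | ⟨a, b, c, d⟩ <;>
    rcases q with ⟨l', r'⟩ | ⟨a', b', c', d'⟩ <;> simp only [MatchesPerfectly] at h
  · exact MatchesSegment.exists_alignsAt_fst h (by simpa using hx)
  · obtain ⟨h₁, h₂⟩ := matchesPerfectly_context.mp h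
    rcases mem_pieceChars_context.mp hx with hx | hx
    exacts [h₁.exists_alignsAt_fst hx, h₂.exists_alignsAt_fst hx]

lemma exists_alignsAt_snd (h : MatchesPerfectly F G path p q) {y : ℕ} (hy : y ∈ pieceChars q) :
    ∃ x ∈ pieceChars p, AlignsAt path x y := by
  rcases p with ⟨l, r⟩ | ⟨a, b, c, d⟩ <;>
    rcases q with ⟨l', r'⟩ | ⟨a', b', c', d'⟩ <;> simp only [MatchesPerfectly] at h
  · obtain ⟨x, hx, hxy⟩ := MatchesSegment.exists_alignsAt_snd h (by simpa using hy)
    exact ⟨x, by simpa using hx, hxy⟩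
  · obtain ⟨h₁, h₂⟩ := matchesPerfectly_context.mp h
    rcases mem_pieceChars_context.mp hy with hy | hy
    · obtain ⟨x, hx, hxy⟩ := h₁.exists_alignsAt_snd hy
      exact ⟨x, by simp [hx], hxy⟩
    · obtain ⟨x, hx, hxy⟩ := h₂.exists_alignsAt_snd hy
      exact ⟨x, by simp [hx], hxy⟩

lemma disjoint_snd (hch : path.IsChain AlignStep) {p' q' : Piece}
    (h : MatchesPerfectly F G path p q) (h' : MatchesPerfectly F G path p' q')
    (hdisj : Disjoint (pieceChars p) (pieceChars p')) : Disjoint (pieceChars q) (pieceChars q') :=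
  Finset.disjoint_left.mpr fun y hy hy' => by
    obtain ⟨x, hx, hxy⟩ := h.exists_alignsAt_snd hy
    obtain ⟨x', hx', hxy'⟩ := h'.exists_alignsAt_snd hy'
    have := hxy.lt_iff_lt hch hxy'
    have := hxy'.lt_iff_lt hch hxy
    obtain rfl : x = x' := by omega
    exact Finset.disjoint_left.mp hdisj hx hx'

end MatchesPerfectly

end Matching

section Union

variable {α : Type*} {X : List (Paren α)} {f f' u : Piece}

lemma pieceChars_adjacentUnion (hf : IsPiece X f) (hf' : IsPiece X f')
    (hadj : AdjacentUnion f f' u) : pieceChars u = pieceChars f ∪ pieceChars f' := by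
  ext x
  rcases f with ⟨l, r⟩ | ⟨a, b, c, d⟩ <;>
    rcases f' with ⟨l', r'⟩ | ⟨a', b', c', d'⟩ <;> simp only [AdjacentUnion] at hadj
  · obtain ⟨rfl, rfl⟩ := hadj
    simp only [IsPiece] at hf hf'
    simp only [mem_pieceChars_forest, Finset.mem_union]
    omega
  · simp only [IsPiece] at hf hf'
    rcases hadj with ⟨rfl, rfl, rfl⟩ | ⟨rfl, -, rfl⟩ | ⟨rfl, -, rfl⟩ <;>
      simp only [mem_pieceChars_forest, mem_pieceChars_context, Finset.mem_union] <;> omega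
  · obtain ⟨rfl, rfl, rfl⟩ := hadj
    simp only [IsPiece] at hf hf'
    simp only [mem_pieceChars_context, Finset.mem_union]
    omega

lemma IsPiece.adjacentUnion (hf : IsPiece X f) (hf' : IsPiece X f')
    (hdisj : Disjoint (pieceChars f) (pieceChars f')) (hadj : AdjacentUnion f f' u) :
    IsPiece X u := by
  have hcommon (x : ℕ) (hx : x ∈ pieceChars f) (hx' : x ∈ pieceChars f') : False :=
    Finset.disjoint_left.mp hdisj hx hx'
  rcases f with ⟨l, r⟩ | ⟨a, b, c, d⟩ <;>
    rcases f' with ⟨l', r'⟩ | ⟨a', b', c', d'⟩ <;> simp only [AdjacentUnion] at hadj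
  · obtain ⟨rfl, rfl⟩ := hadj
    obtain ⟨hlr, -, hfor⟩ := hf
    obtain ⟨hrr', hr'X, hfor'⟩ := hf'
    exact ⟨by omega, hr'X, frag_append X hlr hrr' ▸ hfor.append hfor'⟩
  · obtain ⟨hab, hbc, hcd, hdX, htree, hhole⟩ := hf
    obtain ⟨hlr', -, hfor'⟩ := hf'
    rcases hadj with ⟨rfl, rfl, rfl⟩ | ⟨rfl, -, rfl⟩ | ⟨rfl, -, rfl⟩
    · exact ⟨by omega, hdX, htree.isForest⟩
    · have hr'c : r' ≤ c := by
        by_contra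
        exact hcommon c (mem_pieceChars_context.mpr (by omega))
          (mem_pieceChars_forest.mpr (by omega))
      refine ⟨by omega, hr'c, hcd, hdX, htree, hfor'.right_of_append ?_⟩
      rwa [frag_append X hlr' hr'c]
    · have hbl' : b ≤ l' := by
        by_contra
        exact hcommon (b - 1) (mem_pieceChars_context.mpr (by omega))
          (mem_pieceChars_forest.mpr (by omega))
      refine ⟨hab, hbl', by omega, hdX, htree, hfor'.left_of_append ?_⟩
      rwa [frag_append X hbl' hlr']
  · obtain ⟨rfl, rfl, rfl⟩ := hadj
    obtain ⟨hab, -, hcd, hdX, htree, -⟩ := hf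
    obtain ⟨hbb', hb'c', hc'c, -, -, hhole'⟩ := hf'
    exact ⟨by omega, hb'c', by omega, hdX, htree, hhole'⟩

end Union

section Seams

variable {α : Type*} {F G : List (Paren α)} {path : List (ℕ × ℕ)} {f f' g g' u : Piece}

def SuccsAlignedFst (path : List (ℕ × ℕ)) (m : ℕ) (s : Finset ℕ) : Prop :=
  ∀ x ∈ s, x + 1 < m → ∃ y, AlignsAt path (x + 1) y

def SuccsAlignedSnd (path : List (ℕ × ℕ)) (n : ℕ) (s : Finset ℕ) : Prop :=
  ∀ y ∈ s, y + 1 < n → ∃ x, AlignsAt path x (y + 1)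

lemma SuccsAlignedFst.union {m : ℕ} {s t : Finset ℕ} (hs : SuccsAlignedFst path m s)
    (ht : SuccsAlignedFst path m t) : SuccsAlignedFst path m (s ∪ t) :=
  fun x hx => (Finset.mem_union.mp hx).elim (hs x) (ht x)

lemma SuccsAlignedSnd.union {n : ℕ} {s t : Finset ℕ} (hs : SuccsAlignedSnd path n s)
    (ht : SuccsAlignedSnd path n t) : SuccsAlignedSnd path n (s ∪ t) :=
  fun y hy => (Finset.mem_union.mp hy).elim (hs y) (ht y)

lemma exists_adjacentUnion_forest_forest (halign : IsAlignment 0 F.length 0 G.length path)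
    {l r r' : ℕ} (hlr : l < r) (hrr' : r < r')
    (hm : MatchesPerfectly F G path (.forest l r) g)
    (hm' : MatchesPerfectly F G path (.forest r r') g')
    (hg : SuccsAlignedSnd path G.length (pieceChars g)) :
    ∃ v, AdjacentUnion g g' v ∧ MatchesPerfectly F G path (.forest l r') v := by
  obtain ⟨l₂, r₂, rfl, hs⟩ := hm.exists_forest
  obtain ⟨l₂', r₂', rfl, hs'⟩ := hm'.exists_forest
  have hlen := hs.1
  have := (hs.alignsAt_last hlr).snd_eq_succ halign (hs'.alignsAt_first hrr') (by omega)
    (hg _ (mem_pieceChars_forest.mpr (by omega)))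
  obtain rfl : l₂' = r₂ := by omega
  exact ⟨.forest l₂ r₂', ⟨rfl, rfl⟩, hs.append hs' hlr hrr'⟩

lemma exists_adjacentUnion_context_fill (halign : IsAlignment 0 F.length 0 G.length path)
    {a b c d : ℕ} (hab : a < b) (hbc : b < c) (hcd : c < d)
    (hm : MatchesPerfectly F G path (.context a b c d) g)
    (hm' : MatchesPerfectly F G path (.forest b c) g')
    (hg : SuccsAlignedSnd path G.length (pieceChars g))
    (hg' : SuccsAlignedSnd path G.length (pieceChars g')) :
    ∃ v, AdjacentUnion g g' v ∧ MatchesPerfectly F G path (.forest a d) v := by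
  obtain ⟨a₂, b₂, c₂, d₂, rfl, hL, hR⟩ := hm.exists_context
  obtain ⟨l₂', r₂', rfl, hs'⟩ := hm'.exists_forest
  have := hL.1; have := hR.1; have := hs'.1
  have := (hL.alignsAt_last hab).snd_eq_succ halign (hs'.alignsAt_first hbc) (by omega)
    (hg _ (mem_pieceChars_context.mpr (by omega)))
  have := (hs'.alignsAt_last hbc).snd_eq_succ halign (hR.alignsAt_first hcd) (by omega)
    (hg' _ (mem_pieceChars_forest.mpr (by omega)))
  obtain ⟨rfl, rfl⟩ : l₂' = b₂ ∧ r₂' = c₂ := by omega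
  exact ⟨.forest a₂ d₂, Or.inl ⟨rfl, rfl, rfl⟩,
    (hL.append hs' hab hbc).append hR (by omega) hcd⟩

lemma exists_adjacentUnion_context_left (halign : IsAlignment 0 F.length 0 G.length path)
    {a b c d r' : ℕ} (hab : a < b) (hbr' : b < r') (hr'c : r' < c) (hcd : c < d)
    (hm : MatchesPerfectly F G path (.context a b c d) g)
    (hm' : MatchesPerfectly F G path (.forest b r') g')
    (hf' : SuccsAlignedFst path F.length (pieceChars (.forest b r')))
    (hg : SuccsAlignedSnd path G.length (pieceChars g)) :
    ∃ v, AdjacentUnion g g' v ∧ MatchesPerfectly F G path (.context a r' c d) v := by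
  obtain ⟨a₂, b₂, c₂, d₂, rfl, hL, hR⟩ := hm.exists_context
  obtain ⟨l₂', r₂', rfl, hs'⟩ := hm'.exists_forest
  have := hL.1; have := hs'.1
  have := (hL.alignsAt_last hab).snd_eq_succ halign (hs'.alignsAt_first hbr') (by omega)
    (hg _ (mem_pieceChars_context.mpr (by omega)))
  obtain rfl : l₂' = b₂ := by omega
  have hne : c₂ ≠ r₂' := fun heq => by
    have := (hs'.alignsAt_last hbr').fst_eq_succ halign (hR.alignsAt_first hcd) (by omega)
      (hf' _ (mem_pieceChars_forest.mpr (by omega)))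
    omega
  exact ⟨.context a₂ r₂' c₂ d₂, Or.inr (Or.inl ⟨rfl, hne, rfl⟩),
    matchesPerfectly_context.mpr ⟨hL.append hs' hab hbr', hR⟩⟩

lemma exists_adjacentUnion_context_right (halign : IsAlignment 0 F.length 0 G.length path)
    {a b c d l' : ℕ} (hab : a < b) (hbl' : b < l') (hl'c : l' < c) (hcd : c < d)
    (hm : MatchesPerfectly F G path (.context a b c d) g)
    (hm' : MatchesPerfectly F G path (.forest l' c) g')
    (hf : SuccsAlignedFst path F.length (pieceChars (.context a b c d)))
    (hg' : SuccsAlignedSnd path G.length (pieceChars g')) :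
    ∃ v, AdjacentUnion g g' v ∧ MatchesPerfectly F G path (.context a b l' d) v := by
  obtain ⟨a₂, b₂, c₂, d₂, rfl, hL, hR⟩ := hm.exists_context
  obtain ⟨l₂', r₂', rfl, hs'⟩ := hm'.exists_forest
  have := hL.1; have := hs'.1
  have := (hs'.alignsAt_last hl'c).snd_eq_succ halign (hR.alignsAt_first hcd) (by omega)
    (hg' _ (mem_pieceChars_forest.mpr (by omega)))
  obtain rfl : c₂ = r₂' := by omega
  have hne : b₂ ≠ l₂' := fun heq => by
    have := (hL.alignsAt_last hab).fst_eq_succ halign (hs'.alignsAt_first hl'c) (by omega)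
      (hf _ (mem_pieceChars_context.mpr (by omega)))
    omega
  exact ⟨.context a₂ b₂ l₂' d₂, Or.inr (Or.inr ⟨rfl, hne, rfl⟩),
    matchesPerfectly_context.mpr ⟨hL, hs'.append hR hl'c hcd⟩⟩

lemma exists_adjacentUnion_context_context (halign : IsAlignment 0 F.length 0 G.length path)
    {a b c d b' c' : ℕ} (hab : a < b) (hbb' : b < b') (hc'c : c' < c) (hcd : c < d)
    (hm : MatchesPerfectly F G path (.context a b c d) g)
    (hm' : MatchesPerfectly F G path (.context b b' c' c) g')
    (hg : SuccsAlignedSnd path G.length (pieceChars g))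
    (hg' : SuccsAlignedSnd path G.length (pieceChars g')) :
    ∃ v, AdjacentUnion g g' v ∧ MatchesPerfectly F G path (.context a b' c' d) v := by
  obtain ⟨a₂, b₂, c₂, d₂, rfl, hL, hR⟩ := hm.exists_context
  obtain ⟨a₂', b₂', c₂', d₂', rfl, hL', hR'⟩ := hm'.exists_context
  have := hL.1; have := hR.1; have := hL'.1; have := hR'.1
  have := (hL.alignsAt_last hab).snd_eq_succ halign (hL'.alignsAt_first hbb') (by omega)
    (hg _ (mem_pieceChars_context.mpr (by omega)))
  have := (hR'.alignsAt_last hc'c).snd_eq_succ halign (hR.alignsAt_first hcd) (by omega)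
    (hg' _ (mem_pieceChars_context.mpr (by omega)))
  obtain ⟨rfl, rfl⟩ : a₂' = b₂ ∧ d₂' = c₂ := by omega
  exact ⟨.context a₂ b₂' c₂' d₂, ⟨rfl, rfl, rfl⟩,
    matchesPerfectly_context.mpr ⟨hL.append hL' hab hbb', hR'.append hR hc'c hcd⟩⟩

lemma exists_adjacentUnion_of_matchesPerfectly (halign : IsAlignment 0 F.length 0 G.length path)
    (hf : IsPiece F f) (hf' : IsPiece F f') (hfne : (pieceChars f).Nonempty)
    (hf'ne : (pieceChars f').Nonempty) (hu : IsPiece F u) (hadj : AdjacentUnion f f' u)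
    (hm : MatchesPerfectly F G path f g) (hm' : MatchesPerfectly F G path f' g')
    (hF : SuccsAlignedFst path F.length (pieceChars f ∪ pieceChars f'))
    (hG : SuccsAlignedSnd path G.length (pieceChars g ∪ pieceChars g')) :
    ∃ v, AdjacentUnion g g' v ∧ MatchesPerfectly F G path u v := by
  have hg : SuccsAlignedSnd path G.length (pieceChars g) := fun y hy => hG y (by simp [hy])
  have hg' : SuccsAlignedSnd path G.length (pieceChars g') := fun y hy => hG y (by simp [hy])
  rcases f with ⟨l, r⟩ | ⟨a, b, c, d⟩ <;>
    rcases f' with ⟨l', r'⟩ | ⟨a', b', c', d'⟩ <;> simp only [AdjacentUnion] at hadj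
  · obtain ⟨rfl, rfl⟩ := hadj
    exact exists_adjacentUnion_forest_forest halign (Finset.nonempty_Ico.mp hfne)
      (Finset.nonempty_Ico.mp hf'ne) hm hm' hg
  · obtain ⟨hab, -, hcd, -⟩ := hf
    have hl'r' : l' < r' := Finset.nonempty_Ico.mp hf'ne
    rcases hadj with ⟨rfl, rfl, rfl⟩ | ⟨rfl, hne, rfl⟩ | ⟨rfl, hne, rfl⟩
    · exact exists_adjacentUnion_context_fill halign hab hl'r' hcd hm hm' hg hg'
    · exact exists_adjacentUnion_context_left halign hab hl'r' (lt_of_le_of_ne hu.2.1 hne.symm)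
        hcd hm hm' (fun x hx => hF x (by simp [hx])) hg
    · exact exists_adjacentUnion_context_right halign hab (lt_of_le_of_ne hu.2.1 hne) hl'r'
        hcd hm hm' (fun x hx => hF x (by simp [hx])) hg'
  · obtain ⟨rfl, rfl, rfl⟩ := hadj
    obtain ⟨hab, -, hcd, -⟩ := hf
    obtain ⟨hbb', -, hc'c, -⟩ := hf'
    exact exists_adjacentUnion_context_context halign hab hbb' hc'c hcd hm hm' hg hg'

end Seams

section Cleanliness

variable {α : Type*} {F G : List (Paren α)} {path : List (ℕ × ℕ)}
  {M : Finset (Piece × Piece)} {f f' g g' u v w : Piece}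

def NeighboursCovered (n : ℕ) (M : Finset (Piece × Piece)) (π : Piece × Piece → Piece)
    (w : Piece) : Prop :=
  ∀ p < n, posAdjacent w p → ∃ q ∈ M, p ∈ pieceChars (π q)

lemma cleanPiece_iff : CleanPiece F G M f ↔ ∃ g, (f, g) ∈ M ∧
    NeighboursCovered F.length M Prod.fst f ∧ NeighboursCovered G.length M Prod.snd g :=
  Iff.rfl

lemma NeighboursCovered.succsAlignedFst (hmatch : ∀ p ∈ M, MatchesPerfectly F G path p.1 p.2)
    (hfg : (f, g) ∈ M) (h : NeighboursCovered F.length M Prod.fst f) :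
    SuccsAlignedFst path F.length (pieceChars f) := fun x hx hxF => by
  by_cases hx1 : x + 1 ∈ pieceChars f
  · exact (hmatch _ hfg).exists_alignsAt_fst hx1
  · obtain ⟨q, hq, hxq⟩ := h (x + 1) hxF ⟨hx1, Or.inr ⟨x, hx, rfl⟩⟩
    exact (hmatch q hq).exists_alignsAt_fst hxq

lemma NeighboursCovered.succsAlignedSnd (hmatch : ∀ p ∈ M, MatchesPerfectly F G path p.1 p.2)
    (hfg : (f, g) ∈ M) (h : NeighboursCovered G.length M Prod.snd g) :
    SuccsAlignedSnd path G.length (pieceChars g) := fun y hy hyG => by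
  by_cases hy1 : y + 1 ∈ pieceChars g
  · obtain ⟨x, -, hxy⟩ := (hmatch _ hfg).exists_alignsAt_snd hy1
    exact ⟨x, hxy⟩
  · obtain ⟨q, hq, hyq⟩ := h (y + 1) hyG ⟨hy1, Or.inr ⟨y, hy, rfl⟩⟩
    obtain ⟨x, -, hxy⟩ := (hmatch q hq).exists_alignsAt_snd hyq
    exact ⟨x, hxy⟩

lemma NeighboursCovered.union {n : ℕ} {π : Piece × Piece → Piece}
    (hf : NeighboursCovered n M π f) (hf' : NeighboursCovered n M π f')
    (hw : pieceChars w = pieceChars f ∪ pieceChars f') : NeighboursCovered n M π w := by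
  rintro p hp ⟨hpw, hnext⟩
  simp only [hw, Finset.mem_union, not_or] at hpw hnext
  rcases hnext with (h | h) | ⟨q, (hq | hq), rfl⟩
  exacts [hf p hp ⟨hpw.1, Or.inl h⟩, hf' p hp ⟨hpw.2, Or.inl h⟩,
    hf _ hp ⟨hpw.1, Or.inr ⟨q, hq, rfl⟩⟩, hf' _ hp ⟨hpw.2, Or.inr ⟨q, hq, rfl⟩⟩]

lemma NeighboursCovered.insert_sdiff {n : ℕ} {π : Piece × Piece → Piece}
    (h : NeighboursCovered n M π w)
    (hπ : pieceChars (π (u, v)) = pieceChars (π (f, g)) ∪ pieceChars (π (f', g'))) :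
    NeighboursCovered n (insert (u, v) (M \ {(f, g), (f', g')})) π w := fun p hp hpw => by
  obtain ⟨q, hq, hpq⟩ := h p hp hpw
  by_cases hq' : q = (f, g) ∨ q = (f', g')
  · refine ⟨(u, v), Finset.mem_insert_self _ _, ?_⟩
    rcases hq' with rfl | rfl <;> simp [hπ, hpq]
  · exact ⟨q, by simp [hq, hq'], hpq⟩

lemma CleanPiece.insert_sdiff {h : Piece} (hh : CleanPiece F G M h)
    (hhff' : h ∉ ({f, f'} : Finset Piece)) (hcu : pieceChars u = pieceChars f ∪ pieceChars f')
    (hcv : pieceChars v = pieceChars g ∪ pieceChars g') :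
    CleanPiece F G (insert (u, v) (M \ {(f, g), (f', g')})) h := by
  obtain ⟨gh, hgh, hhF, hhG⟩ := cleanPiece_iff.mp hh
  refine cleanPiece_iff.mpr ⟨gh, ?_, hhF.insert_sdiff hcu, hhG.insert_sdiff hcv⟩
  simp only [Finset.mem_insert, Finset.mem_singleton, not_or] at hhff'
  simp [hgh, hhff'.1, hhff'.2]

end Cleanliness

section MergedMatching

variable {α : Type*} {F G : List (Paren α)} {M : Finset (Piece × Piece)} {f f' g g' u v : Piece}

lemma IsPieceMatching.insert_sdiff {k : ℕ} {path : List (ℕ × ℕ)}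
    (hM : IsPieceMatching k F G M) (halign : IsAlignment 0 F.length 0 G.length path)
    (hcons : Consistent F G path) (hwidth : WidthLE (2 * k) path)
    (hmatch : ∀ p ∈ M, MatchesPerfectly F G path p.1 p.2)
    (hfg : (f, g) ∈ M) (hf'g' : (f', g') ∈ M)
    (hcu : pieceChars u = pieceChars f ∪ pieceChars f') (hu : IsPiece F u) (hv : IsPiece G v)
    (huv : MatchesPerfectly F G path u v) :
    IsPieceMatching k F G (insert (u, v) (M \ {(f, g), (f', g')})) := by
  obtain ⟨hvalid, hdisj, -⟩ := hM
  have hdisj_u (q) (hq : q ∈ M \ {(f, g), (f', g')}) :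
      Disjoint (pieceChars u) (pieceChars q.1) := by
    simp only [Finset.mem_sdiff, Finset.mem_insert, Finset.mem_singleton, not_or] at hq
    rw [hcu, Finset.disjoint_union_left]
    exact ⟨hdisj _ hfg _ hq.1 (Ne.symm hq.2.1), hdisj _ hf'g' _ hq.1 (Ne.symm hq.2.2)⟩
  refine ⟨?_, ?_, path, halign, hcons, hwidth, ?_⟩
  · exact Finset.forall_mem_insert _ _ _ |>.mpr
      ⟨⟨hu, hv⟩, fun p hp => hvalid p (Finset.mem_sdiff.mp hp).1⟩
  · intro p hp q hq hpq
    rcases Finset.mem_insert.mp hp with rfl | hp <;> rcases Finset.mem_insert.mp hq with rfl | hq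
    · exact absurd rfl hpq
    · exact hdisj_u q hq
    · exact (hdisj_u p hp).symm
    · exact hdisj p (Finset.mem_sdiff.mp hp).1 q (Finset.mem_sdiff.mp hq).1 hpq
  · exact Finset.forall_mem_insert _ _ _ |>.mpr
      ⟨huv, fun p hp => hmatch p (Finset.mem_sdiff.mp hp).1⟩

lemma fst_mem_insert_sdiff {D : Finset Piece}
    (hdisj : ∀ p ∈ M, ∀ q ∈ M, p ≠ q → Disjoint (pieceChars p.1) (pieceChars q.1))
    (hMD : ∀ p ∈ M, p.1 ∈ D) (hfg : (f, g) ∈ M) (hf'g' : (f', g') ∈ M)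
    (hfne : (pieceChars f).Nonempty) (hf'ne : (pieceChars f').Nonempty) :
    ∀ p ∈ insert (u, v) (M \ {(f, g), (f', g')}), p.1 ∈ insert u (D \ {f, f'}) := by
  intro p hp
  rcases Finset.mem_insert.mp hp with rfl | hp
  · exact Finset.mem_insert_self _ _
  simp only [Finset.mem_sdiff, Finset.mem_insert, Finset.mem_singleton, not_or] at hp
  have hne (q : Piece × Piece) (hq : q ∈ M) (hpq : p ≠ q) (hq1 : (pieceChars q.1).Nonempty) :
      p.1 ≠ q.1 := fun h => by
    have := hdisj p hp.1 q hq hpq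
    rw [h, Finset.disjoint_self_iff_empty] at this
    exact hq1.ne_empty this
  simp only [Finset.mem_insert, Finset.mem_sdiff, Finset.mem_singleton, not_or]
  exact Or.inr ⟨hMD p hp.1, hne _ hfg hp.2.1 hfne, hne _ hf'g' hp.2.2 hf'ne⟩

end MergedMatching

theorem merge_adjacent_clean_pieces_general {α : Type*} (k : ℕ) (F G : List (Paren α))
    (D : Finset Piece) (hD : IsPieceDecomp F 0 F.length D)
    (f f' : Piece) (hf : f ∈ D) (hf' : f' ∈ D) (hne : f ≠ f') :
    (Adjacent f f' ↔
      ((∃ l r r', f = Piece.forest l r ∧ f' = Piece.forest r r') ∨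
       (∃ a b c d, f = Piece.context a b c d ∧
          ((∃ r', f' = Piece.forest b r') ∨ (∃ l', f' = Piece.forest l' c))) ∨
       (∃ a b c d b' c', f = Piece.context a b c d ∧ f' = Piece.context b b' c' c))) ∧
    (∀ u, AdjacentUnion f f' u → IsPieceDecomp F 0 F.length (insert u (D \ {f, f'}))) ∧
    (∀ M : Finset (Piece × Piece), IsPieceMatching k F G M → (∀ p ∈ M, p.1 ∈ D) →
      CleanPiece F G M f → CleanPiece F G M f' →
      ∀ u, AdjacentUnion f f' u →
      ∃ g g' v, (f, g) ∈ M ∧ (f', g') ∈ M ∧ AdjacentUnion g g' v ∧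
        IsPieceMatching k F G (insert (u, v) (M \ {(f, g), (f', g')})) ∧
        (∀ p ∈ insert (u, v) (M \ {(f, g), (f', g')}), p.1 ∈ insert u (D \ {f, f'})) ∧
        CleanPiece F G (insert (u, v) (M \ {(f, g), (f', g')})) u ∧
        (∀ h ∈ D \ ({f, f'} : Finset Piece), CleanPiece F G M h →
          CleanPiece F G (insert (u, v) (M \ {(f, g), (f', g')})) h)) := by
  refine ⟨adjacent_iff f f', fun u hadj => hD.merge hf hf' hne hadj, ?_⟩
  intro M hM hMD hcf hcf' u hadj
  obtain ⟨g, hg, hfF, hfG⟩ := cleanPiece_iff.mp hcf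
  obtain ⟨g', hg', hf'F, hf'G⟩ := cleanPiece_iff.mp hcf'
  obtain ⟨hvalid, hdisj, path, halign, hcons, hwidth, hmatch⟩ := id hM
  have hfD := hD.isPiece hf
  have hf'D := hD.isPiece hf'
  have hfne := hD.pieceChars_nonempty hf
  have hf'ne := hD.pieceChars_nonempty hf'
  have hu := hfD.adjacentUnion hf'D (hD.disjoint hf hf' hne) hadj
  obtain ⟨v, hadjG, huv⟩ := exists_adjacentUnion_of_matchesPerfectly halign hfD hf'D hfne hf'ne
    hu hadj (hmatch _ hg) (hmatch _ hg')
    ((hfF.succsAlignedFst hmatch hg).union (hf'F.succsAlignedFst hmatch hg'))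
    ((hfG.succsAlignedSnd hmatch hg).union (hf'G.succsAlignedSnd hmatch hg'))
  have hv := (hvalid _ hg).2.adjacentUnion (hvalid _ hg').2
    ((hmatch _ hg).disjoint_snd halign.2.2 (hmatch _ hg') (hD.disjoint hf hf' hne)) hadjG
  have hcu := pieceChars_adjacentUnion hfD hf'D hadj
  have hcv := pieceChars_adjacentUnion (hvalid _ hg).2 (hvalid _ hg').2 hadjG
  exact ⟨g, g', v, hg, hg', hadjG,
    hM.insert_sdiff halign hcons hwidth hmatch hg hg' hcu hu hv huv,
    fst_mem_insert_sdiff hdisj hMD hg hg' hfne hf'ne,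
    cleanPiece_iff.mpr ⟨v, Finset.mem_insert_self _ _, (hfF.union hf'F hcu).insert_sdiff hcu,
      (hfG.union hf'G hcv).insert_sdiff hcv⟩,
    fun h hh hch => hch.insert_sdiff (Finset.mem_sdiff.mp hh).2 hcu hcv⟩

/-- Observation 5.7: for pieces `f, f'` of a piece
decomposition `D` of `F`, adjacency of `f` and `f'` is characterized by the
three boundary conditions on the corresponding nodes of the hierarchy `H_D`
(two touching subforests; a subforest touching a half of a context; two nested
contexts), merging adjacent pieces again yields a piece decomposition, and
merging two clean matched pieces yields a piece matching preserving
cleanliness. -/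
theorem merge_adjacent_clean_pieces {α : Type*} (k : ℕ) (hk : 0 < k)
    (F G : List (Paren α)) (hF : IsForest F) (hG : IsForest G)
    (D : Finset Piece) (hD : IsPieceDecomp F 0 F.length D)
    (f f' : Piece) (hf : f ∈ D) (hf' : f' ∈ D) (hne : f ≠ f') :
    (Adjacent f f' ↔
      ((∃ l r r', f = Piece.forest l r ∧ f' = Piece.forest r r') ∨
       (∃ a b c d, f = Piece.context a b c d ∧
          ((∃ r', f' = Piece.forest b r') ∨ (∃ l', f' = Piece.forest l' c))) ∨
       (∃ a b c d b' c', f = Piece.context a b c d ∧ f' = Piece.context b b' c' c))) ∧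
    (∀ u, AdjacentUnion f f' u → IsPieceDecomp F 0 F.length (insert u (D \ {f, f'}))) ∧
    (∀ M : Finset (Piece × Piece), IsPieceMatching k F G M → (∀ p ∈ M, p.1 ∈ D) →
      CleanPiece F G M f → CleanPiece F G M f' →
      ∀ u, AdjacentUnion f f' u →
      ∃ g g' v, (f, g) ∈ M ∧ (f', g') ∈ M ∧ AdjacentUnion g g' v ∧
        IsPieceMatching k F G (insert (u, v) (M \ {(f, g), (f', g')})) ∧
        (∀ p ∈ insert (u, v) (M \ {(f, g), (f', g')}), p.1 ∈ insert u (D \ {f, f'})) ∧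
        CleanPiece F G (insert (u, v) (M \ {(f, g), (f', g')})) u ∧
        (∀ h ∈ D \ ({f, f'} : Finset Piece), CleanPiece F G M h →
          CleanPiece F G (insert (u, v) (M \ {(f, g), (f', g')})) h)) :=
  merge_adjacent_clean_pieces_general k F G D hD f f' hf hf' hne
end
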